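/- arXiv:2403.07138 — 7 statements merged into one kernel-verified Lean document; each statement's English description precedes it below -/
import Mathlib

section
/- Let G be a finite abelian group and H ⊆ G a subgroup. Then w(H) ⊆ w(G), and equality w(H) = w(G) holds if and only if H = G. -/
open Multiset Pointwise

/-- Cross number of a sequence (multiset) over an additive group. -/
noncomputable def crossNum {G : Type*} [AddCommGroup G] (S : Multiset G) : ℚ :=
  (S.map (fun g => (1 : ℚ) / (addOrderOf g : ℚ))).sum

/-- A sequence is zero-sum free if no non-empty subsequence sums to zero. -/
def IsZeroSumFree {G : Type*} [AddCommGroup G] (S : Multiset G) : Prop :=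
  ∀ T : Multiset G, T ≤ S → T ≠ 0 → T.sum ≠ (0 : G)

/-- A minimal zero-sum sequence: non-trivial, sum zero, no proper non-trivial
zero-sum subsequence. -/
def IsMinZeroSum {G : Type*} [AddCommGroup G] (S : Multiset G) : Prop :=
  S ≠ 0 ∧ S.sum = 0 ∧ ∀ T : Multiset G, T < S → T ≠ 0 → T.sum ≠ (0 : G)

/-- `wSet G` : set of cross numbers of non-trivial zero-sum free sequences over `G`. -/
def wSet (G : Type*) [AddCommGroup G] : Set ℚ :=
  { k | ∃ S : Multiset G, S ≠ 0 ∧ IsZeroSumFree S ∧ crossNum S = k }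

/-- `WSet G` : set of cross numbers of minimal zero-sum sequences over `G`. -/
def WSet (G : Type*) [AddCommGroup G] : Set ℚ :=
  { k | ∃ S : Multiset G, IsMinZeroSum S ∧ crossNum S = k }

/-! If the subgroup `H` misses some `g`, then prepending `g` to a zero-sum free sequence over `H`
gives a zero-sum free sequence over `G`, so `w(H) = w(G)` would make `w(G)` closed under adding
`1 / ord g`. But `w(G)` is bounded by `|G|`, since a zero-sum free sequence contains each `a`
fewer than `ord a` times. -/

theorem Multiset.exists_le_map_eq_of_le_map {α β : Type*} {f : α → β} {S : Multiset α}
    {T : Multiset β} (h : T ≤ S.map f) : ∃ T' ≤ S, T'.map f = T := by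
  induction S using Quotient.inductionOn
  induction T using Quotient.inductionOn
  obtain ⟨l, hperm, hsub⟩ := Multiset.coe_le.mp h
  obtain ⟨l', hl', rfl⟩ := List.sublist_map_iff.mp hsub
  exact ⟨l', Multiset.coe_le.mpr hl'.subperm, Quot.sound hperm⟩

section Embedding

variable {A B : Type*} [AddCommGroup A] [AddCommGroup B] {f : A →+ B}

theorem crossNum_map (hf : Function.Injective f) (S : Multiset A) :
    crossNum (S.map f) = crossNum S := by
  simp only [crossNum, Multiset.map_map, Function.comp_def, addOrderOf_injective f hf]

theorem IsZeroSumFree.map (hf : Function.Injective f) {S : Multiset A} (hS : IsZeroSumFree S) :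
    IsZeroSumFree (S.map f) := by
  intro T hT hT0
  obtain ⟨T', hT'S, rfl⟩ := Multiset.exists_le_map_eq_of_le_map hT
  have hT'0 : T' ≠ 0 := by rintro rfl; exact hT0 rfl
  rw [← map_multiset_sum, ← f.map_zero, hf.ne_iff]
  exact hS T' hT'S hT'0

theorem wSet_subset_of_injective (hf : Function.Injective f) : wSet A ⊆ wSet B := by
  rintro k ⟨S, hS0, hS, rfl⟩
  exact ⟨S.map f, by simpa using hS0, hS.map hf, crossNum_map hf S⟩

theorem wSet_congr (e : A ≃+ B) : wSet A = wSet B :=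
  (wSet_subset_of_injective (f := e.toAddMonoidHom) e.injective).antisymm
    (wSet_subset_of_injective (f := e.symm.toAddMonoidHom) e.symm.injective)

end Embedding

section

variable {G : Type*} [AddCommGroup G]

theorem isZeroSumFree_zero : IsZeroSumFree (0 : Multiset G) :=
  fun _ hT hT0 => absurd (Multiset.le_zero.mp hT) hT0

theorem crossNum_cons (g : G) (S : Multiset G) :
    crossNum (g ::ₘ S) = 1 / (addOrderOf g : ℚ) + crossNum S := by
  simp [crossNum]

theorem IsZeroSumFree.cons_of_notMem {H : AddSubgroup G} {S : Multiset G} {g : G}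
    (hS : IsZeroSumFree S) (hSH : ∀ x ∈ S, x ∈ H) (hg : g ∉ H) :
    IsZeroSumFree (g ::ₘ S) := by
  classical
  intro T hT hT0
  by_cases hgT : g ∈ T
  · have hrest : T.erase g ≤ S := Multiset.erase_le_iff_le_cons.mpr hT
    have hrestH : (T.erase g).sum ∈ H :=
      H.multiset_sum_mem _ fun x hx => hSH x (Multiset.mem_of_le hrest hx)
    rw [← Multiset.cons_erase hgT, Multiset.sum_cons]
    intro hsum
    exact hg (eq_neg_of_add_eq_zero_left hsum ▸ H.neg_mem hrestH)
  · exact hS T ((Multiset.le_cons_of_notMem hgT).mp hT) hT0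

theorem one_div_addOrderOf_mem_wSet {g : G} (hg : g ≠ 0) :
    1 / (addOrderOf g : ℚ) ∈ wSet G := by
  refine ⟨{g}, Multiset.singleton_ne_zero g, ?_, by simp [crossNum]⟩
  exact isZeroSumFree_zero.cons_of_notMem (H := ⊥) (by simp) (by simpa using hg)

theorem add_one_div_addOrderOf_mem_wSet {H : AddSubgroup G} {g : G} (hg : g ∉ H) {k : ℚ}
    (hk : k ∈ wSet H) : k + 1 / (addOrderOf g : ℚ) ∈ wSet G := by
  obtain ⟨S, hS0, hS, rfl⟩ := hk
  refine ⟨g ::ₘ S.map H.subtype, Multiset.cons_ne_zero, ?_, ?_⟩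
  · refine (hS.map H.subtype_injective).cons_of_notMem ?_ hg
    simp only [Multiset.mem_map]
    rintro _ ⟨x, -, rfl⟩
    exact x.2
  · rw [crossNum_cons, crossNum_map H.subtype_injective, add_comm]

theorem IsZeroSumFree.count_lt_addOrderOf [DecidableEq G] {S : Multiset G}
    (hS : IsZeroSumFree S) {a : G} (ha : IsOfFinAddOrder a) : S.count a < addOrderOf a := by
  by_contra! hle
  refine hS _ (Multiset.le_count_iff_replicate_le.mp hle) ?_ ?_
  · simpa [← Multiset.card_eq_zero] using ha.addOrderOf_pos.ne'
  · rw [Multiset.sum_replicate, addOrderOf_nsmul_eq_zero]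

theorem IsZeroSumFree.crossNum_le_card_toFinset [DecidableEq G] {S : Multiset G}
    (hS : IsZeroSumFree S) : crossNum S ≤ S.toFinset.card := by
  rw [crossNum, Finset.sum_multiset_map_count]
  refine (Finset.sum_le_card_nsmul _ _ 1 fun a _ => ?_).trans (by simp)
  rw [nsmul_eq_mul, mul_one_div]
  rcases (addOrderOf a).eq_zero_or_pos with h | h
  · -- elements of infinite order contribute `1 / 0 = 0`
    simp [h]
  · have hlt := hS.count_lt_addOrderOf (addOrderOf_pos_iff.mp h)
    exact div_le_one_of_le₀ (by exact_mod_cast hlt.le) (Nat.cast_nonneg _)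

theorem le_card_of_mem_wSet [Fintype G] {k : ℚ} (hk : k ∈ wSet G) : k ≤ Fintype.card G := by
  classical
  obtain ⟨S, -, hS, rfl⟩ := hk
  exact hS.crossNum_le_card_toFinset.trans (by exact_mod_cast S.toFinset.card_le_univ)

theorem wSet_ne_of_notMem [Fintype G] {H : AddSubgroup G} {g : G} (hg : g ∉ H) :
    wSet H ≠ wSet G := by
  intro hEq
  have hg0 : g ≠ 0 := by rintro rfl; exact hg H.zero_mem
  set o : ℚ := (addOrderOf g : ℚ)
  have hmem : ∀ n : ℕ, (n + 1 : ℚ) / o ∈ wSet G := by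
    intro n
    induction n with
    | zero => simpa using one_div_addOrderOf_mem_wSet hg0
    | succ n ih =>
      convert add_one_div_addOrderOf_mem_wSet hg (hEq ▸ ih) using 1
      push_cast
      ring
  have ho : 0 < o := Nat.cast_pos.mpr (addOrderOf_pos g)
  have hbound := le_card_of_mem_wSet (hmem (Fintype.card G * addOrderOf g))
  push_cast at hbound
  rw [add_div, mul_div_assoc, div_self ho.ne', mul_one] at hbound
  linarith [one_div_pos.mpr ho]

end

theorem stmt1 (G : Type*) [AddCommGroup G] [Fintype G] (H : AddSubgroup G) :
    wSet H ⊆ wSet G ∧ (wSet H = wSet G ↔ H = ⊤) := by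
  refine ⟨wSet_subset_of_injective H.subtype_injective, fun hEq => ?_, ?_⟩
  · rw [AddSubgroup.eq_top_iff']
    intro g
    by_contra hg
    exact wSet_ne_of_notMem hg hEq
  · rintro rfl
    exact wSet_congr AddSubgroup.topEquiv
end

section
/- If G = G_1 ⊕ ⋯ ⊕ G_s is a finite abelian group with exp(G_i) = n ≥ 2 for all i ∈ [1, s], then (1/n)·[1, (n−1)s] ⊆ w(G), i.e. for every integer j with 1 ≤ j ≤ (n−1)s there exists a non-trivial zero-sum free sequence over G with cross number j/n. -/
open Multiset Pointwise

/-! Choose `g i ∈ G i` of order `n` and let `e i` be `g i` placed in coordinate `i`. A sequence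
using each `e i` at most `n - 1` times is zero-sum free: coordinate `i` of the sum of any
subsequence is `b • g i` with `0 ≤ b < n`, so it vanishes only if `b = 0`. Its cross number is
its length divided by `n`, and every length `j ≤ (n - 1) s` is realised by such a sequence. -/

namespace Multiset

theorem exists_le_eq_map_of_le_map {α β : Type*} {f : α → β} {A : Multiset α}
    {T : Multiset β} (h : T ≤ A.map f) : ∃ B ≤ A, T = B.map f := by
  induction A using Quotient.inductionOn
  induction T using Quotient.inductionOn
  obtain ⟨l, hperm, hsub⟩ := h
  obtain ⟨l', hl', rfl⟩ := List.sublist_map_iff.mp hsub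
  exact ⟨l', hl'.subperm, (Quotient.sound hperm).symm⟩

theorem exists_le_card_eq {α : Type*} {A : Multiset α} {j : ℕ} (h : j ≤ card A) :
    ∃ B ≤ A, card B = j := by
  obtain ⟨B, hB⟩ := card_pos_iff_exists_mem.mp
    (by rw [card_powersetCard]; exact Nat.choose_pos h)
  exact ⟨B, mem_powersetCard.mp hB⟩

theorem exists_card_eq_forall_count_le {ι : Type*} [Fintype ι] [DecidableEq ι] {m j : ℕ}
    (h : j ≤ m * Fintype.card ι) : ∃ A : Multiset ι, card A = j ∧ ∀ i, count i A ≤ m := by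
  obtain ⟨A, hA, hcard⟩ := exists_le_card_eq (A := m • (Finset.univ : Finset ι).val)
    (by simpa using h)
  exact ⟨A, hcard, fun i => by simpa using count_le_of_le i hA⟩

end Multiset

theorem addOrderOf_piSingle {ι : Type*} [DecidableEq ι] {M : ι → Type*} [∀ i, AddMonoid (M i)]
    (i : ι) (x : M i) : addOrderOf (Pi.single i x) = addOrderOf x :=
  addOrderOf_injective (AddMonoidHom.single M i) (Pi.single_injective i) x

section PiSingle

variable {ι : Type*} [DecidableEq ι] {G : ι → Type*} [∀ i, AddCommGroup (G i)]

theorem sum_map_piSingle (g : ∀ i, G i) (B : Multiset ι) :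
    (B.map fun k => Pi.single k (g k)).sum = fun i => count i B • g i := by
  induction B using Multiset.induction_on with
  | empty => ext; simp
  | cons k B ih =>
    ext i
    rw [map_cons, sum_cons, ih, count_cons]
    by_cases hik : i = k
    · subst hik; simp [add_smul, add_comm]
    · simp [hik]

theorem isZeroSumFree_map_piSingle (g : ∀ i, G i) {A : Multiset ι}
    (hA : ∀ i, count i A < addOrderOf (g i)) :
    IsZeroSumFree (A.map fun k => Pi.single k (g k)) := by
  intro T hT hT0 hsum
  obtain ⟨B, hBA, rfl⟩ := exists_le_eq_map_of_le_map hT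
  have hcount : ∀ i, count i B = 0 := fun i =>
    Nat.eq_zero_of_dvd_of_lt
      (addOrderOf_dvd_of_nsmul_eq_zero (by simpa [sum_map_piSingle] using congrFun hsum i))
      ((count_le_of_le i hBA).trans_lt (hA i))
  exact hT0 (by simpa [eq_zero_iff_forall_notMem, count_eq_zero] using hcount)

theorem crossNum_map_piSingle (g : ∀ i, G i) (A : Multiset ι) :
    crossNum (A.map fun k => Pi.single k (g k)) =
      (A.map fun k => (1 : ℚ) / addOrderOf (g k)).sum := by
  simp [crossNum, map_map, addOrderOf_piSingle]

end PiSingle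

theorem stmt3_general (s : ℕ) (G : Fin s → Type*)
    [∀ i, AddCommGroup (G i)] [∀ i, Fintype (G i)]
    (n : ℕ) (hn : 2 ≤ n) (hexp : ∀ i, AddMonoid.exponent (G i) = n) :
    ∀ j : ℕ, 1 ≤ j → j ≤ (n - 1) * s → ((j : ℚ) / n) ∈ wSet (∀ i, G i) := by
  intro j hj1 hj2
  have hg : ∀ i, ∃ g : G i, addOrderOf g = n := fun i => by
    simpa [hexp i] using AddMonoid.exists_addOrderOf_eq_exponent (G := G i) .of_finite
  choose g hg using hg
  obtain ⟨A, hcard, hcount⟩ :=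
    exists_card_eq_forall_count_le (ι := Fin s) (m := n - 1) (by simpa using hj2)
  refine ⟨A.map fun k => Pi.single k (g k), ?_, ?_, ?_⟩
  · simpa [← card_eq_zero, hcard] using (by omega : j ≠ 0)
  · exact isZeroSumFree_map_piSingle g fun i => by have := hcount i; rw [hg i]; omega
  · rw [crossNum_map_piSingle]
    simp [hg, hcard, div_eq_mul_inv]

theorem stmt3 (s : ℕ) (hs : 1 ≤ s) (G : Fin s → Type*)
    [∀ i, AddCommGroup (G i)] [∀ i, Fintype (G i)]
    (n : ℕ) (hn : 2 ≤ n) (hexp : ∀ i, AddMonoid.exponent (G i) = n) :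
    ∀ j : ℕ, 1 ≤ j → j ≤ (n - 1) * s → ((j : ℚ) / n) ∈ wSet (∀ i, G i) :=
  stmt3_general s G n hn hexp
end

section
/- Let G = C_{q_1} ⊕ ⋯ ⊕ C_{q_t} ⊕ C_n where each q_i divides n. Then (1/n)·[1, n−1 + n·Σ_{i=1}^t (q_i−1)/q_i] ⊆ w(G): every rational of the form j/n with 1 ≤ j ≤ n−1 + n·Σ (q_i−1)/q_i is the cross number of some non-trivial zero-sum free sequence over G. -/
open Multiset Pointwise

lemma myRep (n : ℕ) (hn : 0 < n) {ι : Type*} [DecidableEq ι] (q : ι → ℕ) (hq : ∀ i, q i ∣ n) :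
    ∀ (s : Finset ι) (j : ℕ), j ≤ (n - 1) + ∑ i ∈ s, (q i - 1) * (n / q i) →
    ∃ (a : ℕ) (b : ι → ℕ), a ≤ n - 1 ∧ (∀ i, b i ≤ q i - 1) ∧ (∀ i, i ∉ s → b i = 0) ∧
      j = a + ∑ i ∈ s, b i * (n / q i) := by
  intro s
  induction s using Finset.induction_on with
  | empty =>
    intro j hj
    exact ⟨j, 0, by simpa using hj, fun i => Nat.zero_le _, fun _ _ => rfl, by simp⟩
  | @insert i s hi ih =>
    intro j hj
    have hqpos : 0 < q i := by
      rcases Nat.eq_zero_or_pos (q i) with h | h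
      · have := hq i; rw [h] at this; omega
      · exact h
    have hm : 0 < n / q i := Nat.div_pos (Nat.le_of_dvd hn (hq i)) hqpos
    have hmn : n / q i ≤ n := Nat.div_le_self n (q i)
    have hmodlt : j % (n / q i) < n / q i := Nat.mod_lt j hm
    set c := min (q i - 1) (j / (n / q i)) with hcdef
    have hcm : c * (n / q i) ≤ j :=
      le_trans (Nat.mul_le_mul_right _ (min_le_right _ _)) (Nat.div_mul_le_self j _)
    rw [Finset.sum_insert hi] at hj
    have hj' : j - c * (n / q i) ≤ (n - 1) + ∑ k ∈ s, (q k - 1) * (n / q k) := by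
      by_cases hcase : q i - 1 ≤ j / (n / q i)
      · have hc : c = q i - 1 := min_eq_left hcase
        have : (q i - 1) * (n / q i) ≤ j := by
          calc (q i - 1) * (n / q i) ≤ (j / (n / q i)) * (n / q i) :=
                Nat.mul_le_mul_right _ hcase
          _ ≤ j := Nat.div_mul_le_self j _
        rw [hc]; omega
      · have hc : c = j / (n / q i) := min_eq_right (le_of_not_ge hcase)
        have h2 : j < n / q i + j / (n / q i) * (n / q i) := by
          conv_lhs => rw [← Nat.mod_add_div' j (n / q i)]
          exact Nat.add_lt_add_right hmodlt _
        rw [hc]; omega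
    obtain ⟨a, b, ha, hb, hbs, hrep⟩ := ih (j - c * (n / q i)) hj'
    refine ⟨a, Function.update b i c, ha, ?_, ?_, ?_⟩
    · intro k
      by_cases hk : k = i
      · subst hk; rw [Function.update_self]; exact min_le_left _ _
      · rw [Function.update_of_ne hk]; exact hb k
    · intro k hk
      simp only [Finset.mem_insert, not_or] at hk
      rw [Function.update_of_ne hk.1]; exact hbs k hk.2
    · rw [Finset.sum_insert hi, Function.update_self]
      have hsum : ∑ k ∈ s, (Function.update b i c) k * (n / q k)
          = ∑ k ∈ s, b k * (n / q k) := by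
        apply Finset.sum_congr rfl
        intro k hk
        rw [Function.update_of_ne (by rintro rfl; exact hi hk)]
      rw [hsum]
      omega

lemma mySumMap {G M : Type*} [DecidableEq G] [AddCommGroup G] [AddCommMonoid M]
    (f : G →+ M) (y : G) :
    ∀ (T : Multiset G), (∀ x ∈ T, x = y ∨ f x = 0) →
    (T.map f).sum = (T.count y) • f y := by
  intro T
  induction T using Multiset.induction_on with
  | empty => simp
  | cons x T ih =>
    intro h
    have hx := h x (Multiset.mem_cons_self x T)
    have hT : ∀ z ∈ T, z = y ∨ f z = 0 := fun z hz => h z (Multiset.mem_cons_of_mem hz)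
    rw [Multiset.map_cons, Multiset.sum_cons, ih hT, Multiset.count_cons]
    by_cases hxy : x = y
    · subst hxy
      rw [if_pos rfl, add_nsmul, one_nsmul, add_comm]
    · rw [if_neg (fun h => hxy h.symm), add_zero]
      rcases hx with h1 | h1
      · exact absurd h1 hxy
      · rw [h1, zero_add]

theorem stmt5 (t : ℕ) (q : Fin t → ℕ) (n : ℕ) (hn : 2 ≤ n) (hq : ∀ i, q i ∣ n)
    (hexp : AddMonoid.exponent ((∀ i, ZMod (q i)) × ZMod n) = n) :
    ∀ j : ℕ, 1 ≤ j →
      (j : ℚ) ≤ (n : ℚ) - 1 + n * (∑ i, ((q i : ℚ) - 1) / (q i : ℚ)) →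
      ((j : ℚ) / n) ∈ wSet ((∀ i, ZMod (q i)) × ZMod n) := by
  classical
  intro j hj1 hj2
  have hn0 : 0 < n := by omega
  haveI : Fact (1 < n) := ⟨hn⟩
  haveI : NeZero n := ⟨by omega⟩
  have hqpos : ∀ i, 0 < q i := by
    intro i
    rcases Nat.eq_zero_or_pos (q i) with h | h
    · have := hq i; rw [h] at this; omega
    · exact h
  have hnQ : (n : ℚ) ≠ 0 := Nat.cast_ne_zero.mpr hn0.ne'
  -- convert the rational bound to a natural-number bound
  have hcast : (n : ℚ) - 1 + n * (∑ i, ((q i : ℚ) - 1) / (q i : ℚ))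
      = ((n - 1 + ∑ i, (q i - 1) * (n / q i) : ℕ) : ℚ) := by
    rw [Nat.cast_add, Nat.cast_sub (by omega : 1 ≤ n), Nat.cast_one, Nat.cast_sum,
      Finset.mul_sum]
    congr 1
    apply Finset.sum_congr rfl
    intro i _
    have hq0 : (q i : ℚ) ≠ 0 := Nat.cast_ne_zero.mpr (hqpos i).ne'
    rw [Nat.cast_mul, Nat.cast_sub (hqpos i), Nat.cast_one, Nat.cast_div (hq i) hq0]
    ring
  have hjN : j ≤ n - 1 + ∑ i, (q i - 1) * (n / q i) := by
    rw [hcast] at hj2; exact_mod_cast hj2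
  obtain ⟨a, b, ha, hb, -, hrep⟩ := myRep n hn0 q hq Finset.univ j hjN
  -- the sequence
  set g0 : (∀ i, ZMod (q i)) × ZMod n := (0, 1) with hg0def
  set g : Fin t → (∀ i, ZMod (q i)) × ZMod n := fun i => (Pi.single i 1, 0) with hgdef
  set S : Multiset ((∀ i, ZMod (q i)) × ZMod n) :=
    Multiset.replicate a g0 + ∑ i, Multiset.replicate (b i) (g i) with hSdef
  have honen : (1 : ZMod n) ≠ 0 := one_ne_zero
  have hg0g : ∀ i, g0 ≠ g i := by
    intro i h
    have := congrArg Prod.snd h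
    simp only [hg0def, hgdef] at this
    exact honen this
  have h2q : ∀ i, b i ≠ 0 → 2 ≤ q i := by
    intro i hbi
    have := hb i; have := hqpos i; omega
  have honeq : ∀ i, b i ≠ 0 → (1 : ZMod (q i)) ≠ 0 := by
    intro i hbi
    haveI : Fact (1 < q i) := ⟨h2q i hbi⟩
    exact one_ne_zero
  have hgg : ∀ i k : Fin t, b i ≠ 0 → g k = g i → k = i := by
    intro i k hbi hk
    by_contra hne
    have h1 := congrArg (fun x => x.1 i) hk
    simp only [hgdef] at h1
    rw [Pi.single_eq_same, Pi.single_eq_of_ne (fun h => hne (by exact h.symm ▸ rfl))] at h1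
    exact honeq i hbi h1.symm
  -- counts
  have hcount0 : S.count g0 = a := by
    rw [hSdef, Multiset.count_add, Multiset.count_replicate, if_pos rfl,
      Multiset.count_sum']
    rw [Finset.sum_eq_zero (fun i _ => by
      rw [Multiset.count_replicate, if_neg (fun h => hg0g i h.symm)]), add_zero]
  have hcounti : ∀ i, b i ≠ 0 → S.count (g i) = b i := by
    intro i hbi
    rw [hSdef, Multiset.count_add, Multiset.count_replicate,
      if_neg (hg0g i), Multiset.count_sum', zero_add]
    rw [Finset.sum_eq_single i
      (fun k _ hk => by
        rw [Multiset.count_replicate, if_neg (fun h => hk (hgg i k hbi h))])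
      (fun h => absurd (Finset.mem_univ i) h)]
    rw [Multiset.count_replicate, if_pos rfl]
  have hmem : ∀ x ∈ S, x = g0 ∨ ∃ i, b i ≠ 0 ∧ x = g i := by
    intro x hx
    rw [hSdef, Multiset.mem_add] at hx
    rcases hx with hx | hx
    · left; exact Multiset.eq_of_mem_replicate hx
    · right
      rw [Multiset.mem_sum] at hx
      obtain ⟨i, -, hx⟩ := hx
      refine ⟨i, ?_, Multiset.eq_of_mem_replicate hx⟩
      intro h
      rw [h] at hx
      simp at hx
  -- zero-sum freeness
  have hzsf : IsZeroSumFree S := by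
    intro T hT hT0 hTsum
    apply hT0
    refine Multiset.eq_zero_of_forall_notMem (fun x hx => ?_)
    have h0 : T.count g0 = 0 := by
      have hle : T.count g0 ≤ a := hcount0 ▸ Multiset.count_le_of_le g0 hT
      have hmemT : ∀ z ∈ T, z = g0 ∨
          (AddMonoidHom.snd (∀ i, ZMod (q i)) (ZMod n)) z = 0 := by
        intro z hz
        rcases hmem z (Multiset.mem_of_le hT hz) with h | ⟨i, -, h⟩
        · left; exact h
        · right; rw [h, hgdef]; rfl
      have hzero : ((T.count g0 : ℕ) : ZMod n) = 0 := by
        have h1 := (AddMonoidHom.snd (∀ i, ZMod (q i)) (ZMod n)).map_multiset_sum T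
        rw [hTsum, _root_.map_zero] at h1
        rw [mySumMap _ g0 T hmemT] at h1
        have h2 : (AddMonoidHom.snd (∀ i, ZMod (q i)) (ZMod n)) g0 = 1 := rfl
        rw [h2] at h1
        have hns : ((T.count g0 : ℕ) : ZMod n) = T.count g0 • (1 : ZMod n) := by
          simp [nsmul_eq_mul]
        rw [hns, ← h1]
      have hdvd : n ∣ T.count g0 := (ZMod.natCast_eq_zero_iff _ _).mp hzero
      exact Nat.eq_zero_of_dvd_of_lt hdvd (by omega) |>.symm ▸ rfl
    have hcz : ∀ i, b i ≠ 0 → T.count (g i) = 0 := by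
      intro i hbi
      have hle : T.count (g i) ≤ b i := (hcounti i hbi) ▸ Multiset.count_le_of_le (g i) hT
      haveI : NeZero (q i) := ⟨(hqpos i).ne'⟩
      set f : ((∀ k, ZMod (q k)) × ZMod n) →+ ZMod (q i) :=
        (Pi.evalAddMonoidHom (fun k => ZMod (q k)) i).comp
          (AddMonoidHom.fst (∀ k, ZMod (q k)) (ZMod n)) with hfdef
      have hmemT : ∀ z ∈ T, z = g i ∨ f z = 0 := by
        intro z hz
        rcases hmem z (Multiset.mem_of_le hT hz) with h | ⟨k, hbk, h⟩
        · right; rw [h, hfdef, hg0def]; rfl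
        · by_cases hk : k = i
          · left; rw [h, hk]
          · right
            rw [h]
            show (Pi.single k (1 : ZMod (q k)) : ∀ r, ZMod (q r)) i = 0
            exact Pi.single_eq_of_ne (fun hik => hk hik.symm) 1
      have hzero : ((T.count (g i) : ℕ) : ZMod (q i)) = 0 := by
        have h1 := f.map_multiset_sum T
        rw [hTsum, _root_.map_zero] at h1
        rw [mySumMap f (g i) T hmemT] at h1
        have h2 : f (g i) = 1 := by
          show (Pi.single i (1 : ZMod (q i)) : ∀ r, ZMod (q r)) i = 1
          exact Pi.single_eq_same i 1
        rw [h2] at h1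
        have hns : ((T.count (g i) : ℕ) : ZMod (q i)) = T.count (g i) • (1 : ZMod (q i)) := by
          simp [nsmul_eq_mul]
        rw [hns, ← h1]
      have hdvd : q i ∣ T.count (g i) := (ZMod.natCast_eq_zero_iff _ _).mp hzero
      have := hb i
      exact Nat.eq_zero_of_dvd_of_lt hdvd (by omega)
    rcases hmem x (Multiset.mem_of_le hT hx) with h | ⟨i, hbi, h⟩
    · subst h
      have := Multiset.count_pos.mpr hx
      omega
    · subst h
      have := Multiset.count_pos.mpr hx
      have := hcz i hbi
      omega
  -- non-triviality
  have hSne : S ≠ 0 := by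
    intro h
    have hca : a = 0 := by rw [← hcount0, h, Multiset.count_zero]
    have hbz : ∀ i, b i = 0 := by
      intro i
      by_contra hbi
      have := hcounti i hbi
      rw [h, Multiset.count_zero] at this
      exact hbi this.symm
    rw [hca, Finset.sum_eq_zero (fun i _ => by rw [hbz i, Nat.zero_mul])] at hrep
    omega
  -- orders
  have hordg0 : addOrderOf g0 = n := by
    rw [hg0def, Prod.addOrderOf]
    simp [ZMod.addOrderOf_one]
  have hordgi : ∀ i, addOrderOf (g i) = q i := by
    intro i
    rw [hgdef]
    have hinj : Function.Injective ⇑(AddMonoidHom.single (fun k => ZMod (q k)) i) := by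
      intro x y hxy
      exact Pi.single_injective (M := fun k => ZMod (q k)) i
        (by simpa [AddMonoidHom.single_apply] using hxy)
    have hs : addOrderOf (Pi.single i (1 : ZMod (q i)) : ∀ k, ZMod (q k))
        = addOrderOf (1 : ZMod (q i)) := by
      have := addOrderOf_injective (AddMonoidHom.single (fun k => ZMod (q k)) i) hinj 1
      simpa [AddMonoidHom.single_apply] using this
    rw [Prod.addOrderOf]
    rw [show ((g i).1 : ∀ k, ZMod (q k)) = Pi.single i (1 : ZMod (q i)) from rfl]
    rw [show ((g i).2 : ZMod n) = 0 from rfl]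
    rw [hs, ZMod.addOrderOf_one, addOrderOf_zero, Nat.lcm_one_right]
  -- cross number computation
  have hcadd : ∀ (A B : Multiset ((∀ i, ZMod (q i)) × ZMod n)),
      crossNum (A + B) = crossNum A + crossNum B := by
    intro A B; simp [crossNum]
  have hcrep : ∀ (k : ℕ) (x : (∀ i, ZMod (q i)) × ZMod n),
      crossNum (Multiset.replicate k x) = k * (1 / (addOrderOf x : ℚ)) := by
    intro k x
    simp [crossNum, Multiset.map_replicate, Multiset.sum_replicate, nsmul_eq_mul]
  have hcsum : ∀ (s : Finset (Fin t)) (f : Fin t → Multiset ((∀ i, ZMod (q i)) × ZMod n)),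
      crossNum (∑ i ∈ s, f i) = ∑ i ∈ s, crossNum (f i) := by
    intro s f
    induction s using Finset.induction_on with
    | empty => simp [crossNum]
    | @insert i s hi ih =>
      rw [Finset.sum_insert hi, hcadd, ih, Finset.sum_insert hi]
  have hcS : crossNum S = (j : ℚ) / n := by
    rw [hSdef, hcadd, hcrep, hcsum, hordg0]
    have hterm : ∀ i ∈ Finset.univ, crossNum (Multiset.replicate (b i) (g i))
        = (b i : ℚ) * (1 / (q i : ℚ)) := by
      intro i _
      rw [hcrep, hordgi]
    rw [Finset.sum_congr rfl hterm]
    have hjcast : (j : ℚ) = a + ∑ i, (b i : ℚ) * ((n : ℚ) / (q i : ℚ)) := by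
      rw [hrep, Nat.cast_add, Nat.cast_sum]
      congr 1
      apply Finset.sum_congr rfl
      intro i _
      rw [Nat.cast_mul, Nat.cast_div (hq i) (Nat.cast_ne_zero.mpr (hqpos i).ne')]
    rw [hjcast, add_div, Finset.sum_div]
    congr 1
    · rw [mul_one_div]
    · apply Finset.sum_congr rfl
      intro i _
      have hq0 : (q i : ℚ) ≠ 0 := Nat.cast_ne_zero.mpr (hqpos i).ne'
      rw [mul_one_div, mul_div_assoc, div_div, mul_comm (q i : ℚ) (n : ℚ), ← div_div,
        div_self hnQ, mul_one_div]
  exact ⟨S, hSne, hzsf, hcS⟩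
end

section
/- Let G be a finite abelian p-group. Then w(G) = (1/exp(G))·[1, exp(G)·k(G)], i.e. the set of cross numbers of non-trivial zero-sum free sequences over G is exactly the arithmetic progression of all integral multiples of 1/exp(G) from 1/exp(G) up to the small cross number k(G). -/
open Multiset Pointwise

set_option linter.unusedSectionVars false
set_option linter.unnecessarySimpa false
set_option maxHeartbeats 1000000

section Transfer
variable {G : Type*} [AddCommGroup G] {H : Type*} [AddCommGroup H]

lemma crossNum_map_equiv (e : G ≃+ H) (S : Multiset G) :
    crossNum (S.map e) = crossNum S := by
  unfold crossNum
  rw [Multiset.map_map]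
  congr 1
  apply Multiset.map_congr rfl
  intro g _
  simp [addOrderOf_injective e.toAddMonoidHom e.injective]

lemma isZeroSumFree_map_equiv (e : G ≃+ H) {S : Multiset G} (hS : IsZeroSumFree S) :
    IsZeroSumFree (S.map e) := by
  intro T hT hT0 hTsum
  have h1 : (T.map e.symm) ≤ S := by
    have h2 := Multiset.map_le_map (f := ⇑e.symm) hT
    rwa [Multiset.map_map, show (⇑e.symm ∘ ⇑e) = id from funext (fun x => e.symm_apply_apply x),
      Multiset.map_id] at h2
  refine hS _ h1 (by simpa using hT0) ?_
  have h3 : (T.map ⇑e.symm).sum = e.symm T.sum := by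
    rw [← AddEquiv.coe_toAddMonoidHom e.symm, ← AddMonoidHom.map_multiset_sum]
  rw [h3, hTsum]; exact map_zero _

lemma wSet_equiv (e : G ≃+ H) : wSet G = wSet H := by
  ext x
  constructor
  · rintro ⟨S, hS0, hSf, rfl⟩
    exact ⟨S.map e, by simpa using hS0, isZeroSumFree_map_equiv e hSf,
      crossNum_map_equiv e S⟩
  · rintro ⟨S, hS0, hSf, rfl⟩
    exact ⟨S.map e.symm, by simpa using hS0, isZeroSumFree_map_equiv e.symm hSf,
      crossNum_map_equiv e.symm S⟩

end Transfer

section Forward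
variable {G : Type*} [AddCommGroup G] [Fintype G]

lemma crossNum_eq_div (S : Multiset G) :
    crossNum S =
      ((S.map (fun g => AddMonoid.exponent G / addOrderOf g)).sum : ℚ) /
        (AddMonoid.exponent G : ℚ) := by
  have hE : (AddMonoid.exponent G : ℚ) ≠ 0 := by
    exact_mod_cast AddMonoid.exponent_ne_zero_of_finite
  induction S using Multiset.induction with
  | empty => simp [crossNum]
  | cons a S ih =>
    have h1 : addOrderOf a ∣ AddMonoid.exponent G := AddMonoid.addOrder_dvd_exponent a
    have h2 : (addOrderOf a : ℚ) ≠ 0 := by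
      have := addOrderOf_pos a
      positivity
    rw [crossNum, Multiset.map_cons, Multiset.sum_cons, Multiset.map_cons, Multiset.sum_cons,
      ← crossNum, ih]
    rw [Nat.cast_add, Nat.cast_div h1 (by exact_mod_cast h2)]
    field_simp

end Forward

section CN
variable {G : Type*} [AddCommGroup G]

lemma crossNum_add (S T : Multiset G) : crossNum (S + T) = crossNum S + crossNum T := by
  unfold crossNum; rw [Multiset.map_add, Multiset.sum_add]

lemma crossNum_zero : crossNum (0 : Multiset G) = 0 := by simp [crossNum]

lemma crossNum_replicate (n : ℕ) (g : G) :
    crossNum (Multiset.replicate n g) = (n : ℚ) / (addOrderOf g : ℚ) := by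
  unfold crossNum
  rw [Multiset.map_replicate, Multiset.sum_replicate, nsmul_eq_mul]
  ring

lemma crossNum_finsum {ι : Type*} (s : Finset ι) (f : ι → Multiset G) :
    crossNum (∑ i ∈ s, f i) = ∑ i ∈ s, crossNum (f i) := by
  classical
  induction s using Finset.induction with
  | empty => simp [crossNum_zero]
  | insert _ _ hx ih => rw [Finset.sum_insert hx, Finset.sum_insert hx, crossNum_add, ih]

end CN

lemma sum_map_ite_count {α R : Type*} [DecidableEq α] [AddCommMonoidWithOne R] (a : α)
    (T : Multiset α) (f : α → R) (hf : ∀ g ∈ T, f g = if g = a then 1 else 0) :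
    (T.map f).sum = (T.count a : R) := by
  induction T using Multiset.induction with
  | empty => simp
  | cons b T ih =>
    have h1 := hf b (Multiset.mem_cons_self b T)
    rw [Multiset.map_cons, Multiset.sum_cons,
      ih (fun g hg => hf g (Multiset.mem_cons_of_mem hg)), h1]
    by_cases hb : b = a
    · subst hb; rw [if_pos rfl, Multiset.count_cons_self]; push_cast; exact add_comm 1 _
    · rw [if_neg hb, Multiset.count_cons_of_ne (fun h => hb h.symm), zero_add]

section Construct
variable {ι : Type*} [Fintype ι] [DecidableEq ι]

lemma ord_delta (q : ι → ℕ) (i : ι) :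
    addOrderOf (Pi.single i (1 : ZMod (q i)) : ∀ j, ZMod (q j)) = q i := by
  have h := addOrderOf_injective (AddMonoidHom.single (fun j => ZMod (q j)) i)
    (Pi.single_injective (M := fun j => ZMod (q j)) i) (1 : ZMod (q i))
  rw [AddMonoidHom.single_apply] at h
  rw [h, ZMod.addOrderOf_one]

lemma construct (q : ι → ℕ) (c : ι → ℕ) (hc : ∀ i, c i ≤ q i - 1) (hq : ∀ i, 0 < q i) :
    ∃ S : Multiset (∀ i, ZMod (q i)), IsZeroSumFree S ∧
      crossNum S = ∑ i, (c i : ℚ) / (q i : ℚ) ∧ (S = 0 ↔ ∀ i, c i = 0) := by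
  classical
  set δ : ι → (∀ j, ZMod (q j)) := fun i => Pi.single i 1 with hδ
  refine ⟨∑ i, Multiset.replicate (c i) (δ i), ?_, ?_, ?_⟩
  · -- zero-sum free
    intro T hT hT0 hTsum
    obtain ⟨g₀, hg⟩ := Multiset.exists_mem_of_ne_zero hT0
    have hgS := Multiset.mem_of_le hT hg
    rw [Multiset.mem_sum] at hgS
    obtain ⟨i, -, hgi⟩ := hgS
    rw [Multiset.eq_of_mem_replicate hgi] at hg
    have hci : 0 < c i := by
      by_contra h
      simp [Nat.eq_zero_of_not_pos h] at hgi
    have hci' := hc i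
    have hqi0 := hq i
    have hqi : 2 ≤ q i := by omega
    haveI : Fact (1 < q i) := ⟨hqi⟩
    have hδii : δ i i = 1 := Pi.single_eq_same (M := fun j => ZMod (q j)) i 1
    have hval : ∀ g ∈ T, g i = if g = δ i then (1 : ZMod (q i)) else 0 := by
      intro g hgT
      have hmem := Multiset.mem_of_le hT hgT
      rw [Multiset.mem_sum] at hmem
      obtain ⟨j, -, hgj⟩ := hmem
      have hgδ := Multiset.eq_of_mem_replicate hgj
      by_cases hji : j = i
      · subst hji
        rw [hgδ, if_pos rfl, hδii]
      · have h0 : δ j i = 0 := Pi.single_eq_of_ne (Ne.symm hji) 1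
        have hne : δ j ≠ δ i := by
          intro h
          have h1 : δ j i = δ i i := by rw [h]
          rw [h0, hδii] at h1
          exact one_ne_zero h1.symm
        rw [hgδ, if_neg hne, h0]
    have hsumi : T.sum i = ((T.count (δ i) : ℕ) : ZMod (q i)) := by
      have h1 : T.sum i = (T.map (fun g => g i)).sum :=
        (Pi.evalAddMonoidHom (fun j => ZMod (q j)) i).map_multiset_sum T
      rw [h1, sum_map_ite_count (δ i) T _ hval]
    have hcount_le : T.count (δ i) ≤ c i := by
      have h1 := (Multiset.le_iff_count.mp hT) (δ i)
      have h2 : Multiset.count (δ i) (∑ j, Multiset.replicate (c j) (δ j)) = c i := by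
        rw [Multiset.count_sum']
        rw [Finset.sum_eq_single i]
        · simp [Multiset.count_replicate]
        · intro j _ hji
          rw [Multiset.count_replicate, if_neg]
          intro h
          have h1' : δ j i = δ i i := by rw [h]
          have h0 : δ j i = 0 := Pi.single_eq_of_ne (Ne.symm hji) 1
          rw [h0, hδii] at h1'
          exact one_ne_zero h1'.symm
        · simp
      omega
    have hcount_pos : 0 < T.count (δ i) := Multiset.count_pos.mpr hg
    have hz : T.sum i = 0 := by rw [hTsum]; rfl
    rw [hsumi, ZMod.natCast_eq_zero_iff] at hz
    have := Nat.le_of_dvd hcount_pos hz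
    omega
  · rw [crossNum_finsum]
    apply Finset.sum_congr rfl
    intro i _
    rw [crossNum_replicate, hδ, ord_delta]
  · constructor
    · intro h i
      have hle : Multiset.replicate (c i) (δ i) ≤ ∑ j, Multiset.replicate (c j) (δ j) :=
        Finset.single_le_sum (f := fun j => Multiset.replicate (c j) (δ j))
          (fun _ _ => Multiset.zero_le _) (Finset.mem_univ i)
      rw [h, Multiset.le_zero] at hle
      simpa using congrArg Multiset.card hle
    · intro h
      apply Finset.sum_eq_zero
      intro i _
      rw [h i]
      rfl

end Construct

lemma num_rep {ι : Type*} [DecidableEq ι] (B : ℕ) (w cap : ι → ℕ)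
    (hw : ∀ i, 0 < w i) (hwB : ∀ i, w i ≤ B) (F : Finset ι) :
    ∀ (j : ℕ), j ≤ B - 1 + ∑ i ∈ F, cap i * w i →
    ∃ (c : ι → ℕ) (m : ℕ), (∀ i, c i ≤ cap i) ∧ (∀ i ∉ F, c i = 0) ∧ m ≤ B - 1 ∧
      (∑ i ∈ F, c i * w i) + m = j := by
  induction F using Finset.induction with
  | empty =>
    intro j hj
    exact ⟨fun _ => 0, j, fun _ => Nat.zero_le _, fun _ _ => rfl, by simpa using hj, by simp⟩
  | @insert a F ha ih =>
    intro j hj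
    rw [Finset.sum_insert ha] at hj
    set ca := min (cap a) (j / w a) with hca
    have hcaw : ca * w a ≤ j := by
      calc ca * w a ≤ (j / w a) * w a := Nat.mul_le_mul_right _ (min_le_right _ _)
        _ ≤ j := Nat.div_mul_le_self j (w a)
    have hj' : j - ca * w a ≤ B - 1 + ∑ i ∈ F, cap i * w i := by
      by_cases h : cap a ≤ j / w a
      · have h2 : ca * w a = cap a * w a := by rw [hca, min_eq_left h]
        omega
      · have h1 : ca * w a = j / w a * w a := by rw [hca, min_eq_right (le_of_not_ge h)]
        have h2 : j % w a + j / w a * w a = j := Nat.mod_add_div' j (w a)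
        have h3 : j % w a < w a := Nat.mod_lt _ (hw a)
        have h4 := hwB a
        omega
    obtain ⟨c, m, hcap, hout, hm, hsum⟩ := ih _ hj'
    refine ⟨Function.update c a ca, m, ?_, ?_, hm, ?_⟩
    · intro i
      by_cases hia : i = a
      · subst hia; rw [Function.update_self]; exact min_le_left _ _
      · rw [Function.update_of_ne hia]; exact hcap i
    · intro i hi
      have hia : i ≠ a := fun h => hi (h ▸ Finset.mem_insert_self a F)
      rw [Function.update_of_ne hia]
      exact hout i (fun h => hi (Finset.mem_insert_of_mem h))
    · rw [Finset.sum_insert ha, Function.update_self]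
      have h5 : ∑ i ∈ F, Function.update c a ca i * w i = ∑ i ∈ F, c i * w i := by
        apply Finset.sum_congr rfl
        intro i hi
        rw [Function.update_of_ne (fun h => ha (by rw [← h]; exact hi))]
      rw [h5]
      omega

lemma ord_delta' {ι : Type*} [DecidableEq ι] (q : ι → ℕ) (i : ι) :
    addOrderOf (Pi.single i (1 : ZMod (q i)) : ∀ j, ZMod (q j)) = q i := by
  have h := addOrderOf_injective (AddMonoidHom.single (fun j => ZMod (q j)) i)
    (Pi.single_injective (M := fun j => ZMod (q j)) i) (1 : ZMod (q i))
  rw [AddMonoidHom.single_apply] at h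
  rw [h, ZMod.addOrderOf_one]

namespace CB

variable {ι : Type*} [Fintype ι] [DecidableEq ι] (p : ℕ) (q : ι → ℕ)

noncomputable def X (i : ι) : AddMonoidAlgebra (ZMod p) (∀ j, ZMod (q j)) :=
  AddMonoidAlgebra.single (Pi.single i 1) 1 - 1

noncomputable def V (w : ι → ℕ) (m : ℕ) :
    Submodule (ZMod p) (AddMonoidAlgebra (ZMod p) (∀ j, ZMod (q j))) :=
  Submodule.span (ZMod p)
    {x | ∃ α : ι → ℕ, m ≤ ∑ i, α i * w i ∧ x = ∏ i, X p q i ^ α i}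

variable (w : ι → ℕ)

lemma V_antitone {m n : ℕ} (h : m ≤ n) : V p q w n ≤ V p q w m :=
  Submodule.span_mono (fun x hx => by
    obtain ⟨α, hα, hxx⟩ := hx
    exact ⟨α, le_trans h hα, hxx⟩)

lemma one_mem_V : (1 : AddMonoidAlgebra (ZMod p) (∀ j, ZMod (q j))) ∈ V p q w 0 :=
  Submodule.subset_span ⟨fun _ => 0, by simp, by simp⟩

lemma mul_mem_V {x y : AddMonoidAlgebra (ZMod p) (∀ j, ZMod (q j))} {m n : ℕ}
    (hx : x ∈ V p q w m) (hy : y ∈ V p q w n) : x * y ∈ V p q w (m + n) := by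
  have h := Submodule.mul_mem_mul hx hy
  rw [V, V, Submodule.span_mul_span] at h
  refine Submodule.span_le.mpr ?_ h
  rintro z hz
  rw [Set.mem_mul] at hz
  obtain ⟨x', ⟨α, hα, rfl⟩, y', ⟨β, hβ, rfl⟩, rfl⟩ := hz
  refine Submodule.subset_span ⟨fun i => α i + β i, ?_, ?_⟩
  · have h1 : ∑ i, (α i + β i) * w i = (∑ i, α i * w i) + ∑ i, β i * w i := by
      rw [← Finset.sum_add_distrib]
      exact Finset.sum_congr rfl (fun i _ => add_mul _ _ _)
    rw [h1]
    exact Nat.add_le_add hα hβ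
  · simp_rw [pow_add]
    rw [Finset.prod_mul_distrib]

lemma charus : CharP (AddMonoidAlgebra (ZMod p) (∀ j, ZMod (q j))) p := by
  apply charP_of_injective_algebraMap (R := ZMod p) ?_ p
  rw [AddMonoidAlgebra.coe_algebraMap]
  have h : (AddMonoidAlgebra.single (0 : ∀ j, ZMod (q j)) ∘ ⇑(algebraMap (ZMod p) (ZMod p)))
      = fun r : ZMod p => AddMonoidAlgebra.single (0 : ∀ j, ZMod (q j)) r := by
    funext r
    simp
  rw [h]
  exact AddMonoidAlgebra.single_right_injective

lemma one_plus_pow_sub_one_mem {y : AddMonoidAlgebra (ZMod p) (∀ j, ZMod (q j))} {v : ℕ}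
    (hy : y ∈ V p q w v) : ∀ u : ℕ, (1 + y) ^ u - 1 ∈ V p q w v := by
  intro u
  induction u with
  | zero => simpa using Submodule.zero_mem _
  | succ u ih =>
    have hid : (1 + y) ^ (u + 1) - 1 = ((1 + y) ^ u - 1) * (1 + y) + y := by ring
    rw [hid]
    refine Submodule.add_mem _ ?_ hy
    have h1 : (1 + y) ∈ V p q w 0 :=
      Submodule.add_mem _ (one_mem_V p q w) (V_antitone p q w (Nat.zero_le v) hy)
    have h2 := mul_mem_V p q w ih h1
    simpa using h2

lemma prod_sub_one_mem {v : ℕ} (f : ι → AddMonoidAlgebra (ZMod p) (∀ j, ZMod (q j)))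
    (F : Finset ι) (hf : ∀ i ∈ F, f i - 1 ∈ V p q w v) :
    (∏ i ∈ F, f i) - 1 ∈ V p q w v := by
  induction F using Finset.induction with
  | empty => simpa using Submodule.zero_mem _
  | @insert a F ha ih =>
    rw [Finset.prod_insert ha]
    have hP := ih (fun i hi => hf i (Finset.mem_insert_of_mem hi))
    have hfa := hf a (Finset.mem_insert_self a F)
    have hid : f a * ∏ i ∈ F, f i - 1
        = (f a - 1) * (∏ i ∈ F, f i) + ((∏ i ∈ F, f i) - 1) := by ring
    rw [hid]
    refine Submodule.add_mem _ ?_ hP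
    have hPP : (∏ i ∈ F, f i) ∈ V p q w 0 := by
      have h3 := Submodule.add_mem _ (V_antitone p q w (Nat.zero_le v) hP) (one_mem_V p q w)
      simpa using h3
    have h4 := mul_mem_V p q w hfa hPP
    simpa using h4

lemma single_sum {κ : Type*} (F : Finset κ) (v : κ → (∀ j, ZMod (q j))) :
    AddMonoidAlgebra.single (∑ i ∈ F, v i) (1 : ZMod p)
      = ∏ i ∈ F, AddMonoidAlgebra.single (v i) 1 := by
  classical
  induction F using Finset.induction with
  | empty => simp [AddMonoidAlgebra.one_def]
  | @insert a F ha ih =>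
    rw [Finset.sum_insert ha, Finset.prod_insert ha, ← ih,
      AddMonoidAlgebra.single_mul_single, one_mul]

section CharPStuff

variable [Fact p.Prime] [CharP (AddMonoidAlgebra (ZMod p) (∀ j, ZMod (q j))) p]

lemma X_pow_q (k : ι → ℕ) (hq : ∀ i, q i = p ^ k i) (i : ι) :
    (X p q i) ^ (q i) = 0 := by
  have h1 : (p ^ k i) • (Pi.single i (1 : ZMod (q i)) : ∀ j, ZMod (q j)) = 0 := by
    apply addOrderOf_dvd_iff_nsmul_eq_zero.mp
    rw [ord_delta' q i, hq i]
  rw [hq i, X, sub_pow_char_pow, AddMonoidAlgebra.single_pow, one_pow, h1,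
    ← AddMonoidAlgebra.one_def, one_pow]
  exact sub_self 1

lemma V_eq_bot (k : ι → ℕ) (hq : ∀ i, q i = p ^ k i) {m : ℕ}
    (hm : (∑ i, (q i - 1) * w i) < m) : V p q w m = ⊥ := by
  rw [V, Submodule.span_eq_bot]
  rintro x ⟨α, hα, rfl⟩
  have hex : ∃ i, q i ≤ α i := by
    by_contra h
    push_neg at h
    have h1 : ∑ i, α i * w i ≤ ∑ i, (q i - 1) * w i :=
      Finset.sum_le_sum (fun i _ => Nat.mul_le_mul_right _ (by have := h i; omega))
    omega
  obtain ⟨i, hi⟩ := hex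
  apply Finset.prod_eq_zero (Finset.mem_univ i)
  rw [show α i = q i + (α i - q i) by omega, pow_add, X_pow_q p q k hq i, zero_mul]

lemma key_mem (hp : p.Prime) (k : ι → ℕ) (hq : ∀ i, q i = p ^ k i) (i₀ : ι)
    (hk : ∀ i, k i ≤ k i₀) (g : ∀ j, ZMod (q j)) :
    1 - AddMonoidAlgebra.single g (1 : ZMod p)
      ∈ V p q (fun i => p ^ (k i₀ - k i)) (p ^ k i₀ / addOrderOf g) := by
  set w : ι → ℕ := fun i => p ^ (k i₀ - k i) with hw
  have hord_i : ∀ i, addOrderOf (g i) ∣ q i := fun i => by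
    have h := AddMonoid.addOrder_dvd_exponent (g i)
    rwa [ZMod.exponent] at h
  have hEg : (p ^ k i₀) • g = 0 := by
    funext j
    rw [Pi.smul_apply]
    have h1 : addOrderOf (g j) ∣ p ^ k i₀ :=
      dvd_trans (hord_i j) (by rw [hq j]; exact pow_dvd_pow p (hk j))
    rw [addOrderOf_dvd_iff_nsmul_eq_zero] at h1
    rw [h1]
    rfl
  have hog : addOrderOf g ∣ p ^ k i₀ := addOrderOf_dvd_of_nsmul_eq_zero hEg
  obtain ⟨a, ha, hoa⟩ := (Nat.dvd_prime_pow hp).mp hog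
  rw [hoa, Nat.pow_div ha hp.pos]
  have hcomp : ∀ i, (AddMonoidAlgebra.single (Pi.single i (g i) : ∀ j, ZMod (q j)) (1 : ZMod p)) - 1
      ∈ V p q w (p ^ (k i₀ - a)) := by
    intro i
    haveI : NeZero (q i) := ⟨by rw [hq i]; exact pow_ne_zero _ hp.pos.ne'⟩
    set c := (g i).val with hc
    have hgc : ((c : ℕ) : ZMod (q i)) = g i := ZMod.natCast_rightInverse (g i)
    -- order of component divides p ^ a
    have hoi : addOrderOf (g i) ∣ p ^ a := by
      rw [← hoa]
      apply addOrderOf_dvd_of_nsmul_eq_zero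
      have h2 : (addOrderOf g • g) i = (0 : ZMod (q i)) := by rw [addOrderOf_nsmul_eq_zero g]; rfl
      rw [← h2]
      rfl
    obtain ⟨ai, hai, hoai⟩ := (Nat.dvd_prime_pow hp).mp hoi
    have hki : ai ≤ k i := by
      have h3 : p ^ ai ∣ p ^ k i := by rw [← hoai, ← hq i]; exact hord_i i
      exact (Nat.pow_dvd_pow_iff_le_right hp.one_lt).mp h3
    have hdvd_c : p ^ (k i - ai) ∣ c := by
      have h1 : (((addOrderOf (g i)) * c : ℕ) : ZMod (q i)) = 0 := by
        push_cast
        rw [hgc, ← nsmul_eq_mul, addOrderOf_nsmul_eq_zero]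
      rw [ZMod.natCast_eq_zero_iff] at h1
      have h2 : p ^ ai * p ^ (k i - ai) ∣ p ^ ai * c := by
        rw [← pow_add, show ai + (k i - ai) = k i by omega, ← hq i, ← hoai]
        exact h1
      exact (mul_dvd_mul_iff_left (pow_ne_zero ai hp.pos.ne')).mp h2
    obtain ⟨u, hu⟩ := hdvd_c
    have hsingle : (Pi.single i (g i) : ∀ j, ZMod (q j))
        = c • (Pi.single i (1 : ZMod (q i)) : ∀ j, ZMod (q j)) := by
      have hh := (AddMonoidHom.single (fun j => ZMod (q j)) i).map_nsmul c (1 : ZMod (q i))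
      rw [AddMonoidHom.single_apply, AddMonoidHom.single_apply] at hh
      rw [← hh, nsmul_eq_mul, mul_one]
      exact congrArg _ hgc.symm
    have h2 : AddMonoidAlgebra.single (Pi.single i (g i) : ∀ j, ZMod (q j)) (1 : ZMod p)
        = (AddMonoidAlgebra.single (Pi.single i (1 : ZMod (q i)) : ∀ j, ZMod (q j)) 1) ^ c := by
      rw [AddMonoidAlgebra.single_pow, one_pow, ← hsingle]
    have h3 : AddMonoidAlgebra.single (Pi.single i (1 : ZMod (q i)) : ∀ j, ZMod (q j)) (1 : ZMod p)
        = 1 + X p q i := by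
      rw [X]; ring
    have h4 : (1 + X p q i) ^ c = (1 + (X p q i) ^ (p ^ (k i - ai))) ^ u := by
      rw [hu, pow_mul]
      congr 1
      rw [add_pow_char_pow, one_pow]
    have h5 : (X p q i) ^ (p ^ (k i - ai)) ∈ V p q w (p ^ (k i₀ - a)) := by
      apply Submodule.subset_span
      refine ⟨fun j => if j = i then p ^ (k i - ai) else 0, ?_, ?_⟩
      · show p ^ (k i₀ - a) ≤ ∑ j, (if j = i then p ^ (k i - ai) else 0) * w j
        rw [Finset.sum_eq_single i]
        · rw [if_pos rfl, hw, ← pow_add]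
          apply Nat.pow_le_pow_right hp.one_lt.le
          omega
        · intro j _ hji
          rw [if_neg hji, zero_mul]
        · intro h; exact absurd (Finset.mem_univ i) h
      · show X p q i ^ p ^ (k i - ai) = ∏ j, X p q j ^ (if j = i then p ^ (k i - ai) else 0)
        rw [Finset.prod_eq_single i]
        · rw [if_pos rfl]
        · intro j _ hji
          rw [if_neg hji, pow_zero]
        · intro h; exact absurd (Finset.mem_univ i) h
    rw [h2, h3, h4]
    exact one_plus_pow_sub_one_mem p q w h5 u
  -- combine
  have hgsum : g = ∑ i, Pi.single i (g i) := by
    funext j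
    rw [Finset.sum_apply]
    exact (Fintype.sum_pi_single j g).symm
  have h6 : AddMonoidAlgebra.single g (1 : ZMod p)
      = ∏ i, AddMonoidAlgebra.single (Pi.single i (g i) : ∀ j, ZMod (q j)) 1 := by
    conv_lhs => rw [hgsum]
    exact single_sum p q Finset.univ _
  have h7 := prod_sub_one_mem p q w _ Finset.univ (fun i _ => hcomp i)
  rw [← h6] at h7
  have h8 := Submodule.neg_mem _ h7
  rwa [neg_sub] at h8

lemma prod_multiset_mem (hp : p.Prime) (k : ι → ℕ) (hq : ∀ i, q i = p ^ k i) (i₀ : ι)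
    (hk : ∀ i, k i ≤ k i₀) (S : Multiset (∀ j, ZMod (q j))) :
    (S.map (fun g => 1 - AddMonoidAlgebra.single g (1 : ZMod p))).prod
      ∈ V p q (fun i => p ^ (k i₀ - k i))
          ((S.map (fun g => p ^ k i₀ / addOrderOf g)).sum) := by
  induction S using Multiset.induction with
  | empty => simpa using one_mem_V p q _
  | cons g S ih =>
    simp only [Multiset.map_cons, Multiset.prod_cons, Multiset.sum_cons]
    exact mul_mem_V p q _ (key_mem p q hp k hq i₀ hk g) ih

end CharPStuff

lemma expand (S : Multiset (∀ j, ZMod (q j))) :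
    (S.map (fun g => 1 - AddMonoidAlgebra.single g (1 : ZMod p))).prod =
    (S.powerset.map
      (fun T => AddMonoidAlgebra.single T.sum ((-1 : ZMod p) ^ Multiset.card T))).sum := by
  induction S using Multiset.induction with
  | empty => simp [Multiset.powerset_zero, AddMonoidAlgebra.one_def]
  | cons g S ih =>
    rw [Multiset.map_cons, Multiset.prod_cons, ih, Multiset.powerset_cons, Multiset.map_add,
      Multiset.sum_add, Multiset.map_map]
    rw [sub_mul, one_mul, sub_eq_add_neg]
    congr 1
    have hfun : ((fun T : Multiset (∀ j, ZMod (q j)) =>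
          AddMonoidAlgebra.single T.sum ((-1 : ZMod p) ^ Multiset.card T)) ∘ Multiset.cons g)
        = fun T : Multiset (∀ j, ZMod (q j)) => (-(AddMonoidAlgebra.single g (1 : ZMod p))) *
            AddMonoidAlgebra.single T.sum ((-1 : ZMod p) ^ Multiset.card T) := by
      funext T
      show AddMonoidAlgebra.single ((g ::ₘ T).sum) ((-1 : ZMod p) ^ Multiset.card (g ::ₘ T)) = _
      rw [Multiset.sum_cons, Multiset.card_cons, pow_succ, mul_neg_one, neg_mul,
        AddMonoidAlgebra.single_mul_single, one_mul, ← AddMonoidAlgebra.single_neg]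
    rw [hfun, Multiset.sum_map_mul_left, neg_mul]

lemma count_zero_powerset {α : Type*} [DecidableEq α] (S : Multiset α) :
    Multiset.count (0 : Multiset α) S.powerset = 1 := by
  induction S using Multiset.induction with
  | empty => simp
  | cons a S ih =>
    rw [Multiset.powerset_cons, Multiset.count_add, ih,
      Multiset.count_eq_zero.mpr, Nat.add_zero]
    intro h
    rw [Multiset.mem_map] at h
    obtain ⟨T, _, hT⟩ := h
    exact Multiset.cons_ne_zero hT

lemma coeff_zero (S : Multiset (∀ j, ZMod (q j))) (hS : IsZeroSumFree S) :
    Finsupp.applyAddHom (0 : ∀ j, ZMod (q j))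
      ((((S.map (fun g => 1 - AddMonoidAlgebra.single g (1 : ZMod p))).prod :
          AddMonoidAlgebra (ZMod p) (∀ j, ZMod (q j)))).coeff) = 1 := by
  rw [expand]
  have hc : ∀ s : Multiset (AddMonoidAlgebra (ZMod p) (∀ j, ZMod (q j))),
      s.sum.coeff = (s.map AddMonoidAlgebra.coeff).sum :=
    fun s => map_multiset_sum AddMonoidAlgebra.coeffAddEquiv s
  rw [hc, Multiset.map_map]
  rw [map_multiset_sum (Finsupp.applyAddHom (0 : ∀ j, ZMod (q j)) :
    ((∀ j, ZMod (q j)) →₀ ZMod p) →+ ZMod p), Multiset.map_map]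
  have h2 : ∀ T ∈ S.powerset,
      (Finsupp.applyAddHom (0 : ∀ j, ZMod (q j)) ∘ (AddMonoidAlgebra.coeff ∘
        fun T : Multiset (∀ j, ZMod (q j)) =>
          AddMonoidAlgebra.single T.sum ((-1 : ZMod p) ^ Multiset.card T))) T
      = if T = (0 : Multiset (∀ j, ZMod (q j))) then 1 else 0 := by
    intro T hT
    rw [Multiset.mem_powerset] at hT
    show (Finsupp.single T.sum ((-1 : ZMod p) ^ Multiset.card T) :
      (∀ j, ZMod (q j)) →₀ ZMod p) 0 = _
    by_cases h : T = 0
    · subst h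
      simp [Finsupp.single_apply]
    · have h3 : T.sum ≠ 0 := hS T hT h
      rw [if_neg h, Finsupp.single_apply, if_neg h3]
  rw [sum_map_ite_count (0 : Multiset (∀ j, ZMod (q j))) S.powerset _ h2,
    count_zero_powerset, Nat.cast_one]

theorem cross_bound (hp : p.Prime) (k : ι → ℕ) (hq : ∀ i, q i = p ^ k i) (i₀ : ι)
    (hk : ∀ i, k i ≤ k i₀) (S : Multiset (∀ j, ZMod (q j))) (hS : IsZeroSumFree S) :
    (S.map (fun g => p ^ k i₀ / addOrderOf g)).sum ≤ ∑ i, (q i - 1) * p ^ (k i₀ - k i) := by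
  haveI := Fact.mk hp
  haveI := charus p q
  by_contra hcon
  push_neg at hcon
  have h1 := prod_multiset_mem p q hp k hq i₀ hk S
  rw [V_eq_bot p q _ k hq hcon, Submodule.mem_bot] at h1
  have h2 := coeff_zero p q S hS
  rw [h1] at h2
  haveI := Fact.mk hp.one_lt
  simp at h2

end CB


theorem stmt6 (G : Type*) [AddCommGroup G] [Fintype G]
    (p : ℕ) (hp : p.Prime) (hG : ∃ m : ℕ, Fintype.card G = p ^ m)
    (kG : ℚ) (hkG : IsGreatest (wSet G) kG) :
    wSet G = { x : ℚ | ∃ j : ℕ, 1 ≤ j ∧ (j : ℚ) ≤ (AddMonoid.exponent G : ℚ) * kG ∧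
      x = (j : ℚ) / (AddMonoid.exponent G : ℚ) } := by
  classical
  obtain ⟨m, hm⟩ := hG
  -- G is nontrivial
  have hGnt : ∃ g : G, g ≠ 0 := by
    obtain ⟨S₀, hS₀ne, hS₀f, -⟩ := hkG.1
    obtain ⟨g, hg⟩ := Multiset.exists_mem_of_ne_zero hS₀ne
    refine ⟨g, ?_⟩
    have h1 := hS₀f {g} (Multiset.singleton_le.mpr hg) (Multiset.cons_ne_zero)
    rwa [Multiset.sum_singleton] at h1
  -- structure theorem
  obtain ⟨ι, hι, pr, hpr, n, ⟨e0⟩⟩ := AddCommGroup.equiv_directSum_zmod_of_finite G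
  set q : ι → ℕ := fun i => pr i ^ n i with hqdef
  let e1 : (DirectSum ι fun i => ZMod (q i)) ≃+ (∀ i, ZMod (q i)) :=
    { DFinsupp.equivFunOnFintype with
      map_add' := fun a b => funext (fun i => DirectSum.add_apply a b i) }
  let e : G ≃+ (∀ i, ZMod (q i)) := e0.trans e1
  have hwq : wSet G = wSet (∀ i, ZMod (q i)) := wSet_equiv e
  have hEH : AddMonoid.exponent G = AddMonoid.exponent (∀ i, ZMod (q i)) :=
    AddMonoid.exponent_eq_of_addEquiv e
  letI : Fintype (∀ i, ZMod (q i)) := Fintype.ofEquiv G e.toEquiv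
  have hexp_pi : AddMonoid.exponent (∀ i, ZMod (q i)) = Finset.univ.lcm q := by
    rw [AddMonoid.exponent_pi]
    congr 1
    funext i
    exact ZMod.exponent (q i)
  -- each q i is a power of p
  have hqdvd : ∀ i, q i ∣ p ^ m := by
    intro i
    have h1 : q i ∣ AddMonoid.exponent (∀ i, ZMod (q i)) := by
      rw [hexp_pi]
      exact Finset.dvd_lcm (Finset.mem_univ i)
    rw [← hEH] at h1
    exact h1.trans (hm ▸ AddGroup.exponent_dvd_card)
  have hqk' : ∀ i, ∃ ki, q i = p ^ ki := by
    intro i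
    obtain ⟨ki, -, hki⟩ := (Nat.dvd_prime_pow hp).mp (hqdvd i)
    exact ⟨ki, hki⟩
  choose k hqk using hqk'
  have hqpos : ∀ i, 0 < q i := fun i => by rw [hqk i]; exact pow_pos hp.pos _
  -- nonempty index type
  have hNEι : Nonempty ι := by
    rcases isEmpty_or_nonempty ι with hE | hNE
    · exfalso
      haveI : Subsingleton (∀ i, ZMod (q i)) := ⟨fun a b => funext (fun i => (hE.false i).elim)⟩
      obtain ⟨g, hg0⟩ := hGnt
      exact hg0 (e.injective (Subsingleton.elim _ _))
    · exact hNE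
  obtain ⟨i₀, -, hmax'⟩ := Finset.exists_max_image Finset.univ k Finset.univ_nonempty
  have hmax : ∀ i, k i ≤ k i₀ := fun i => hmax' i (Finset.mem_univ i)
  have hEq : AddMonoid.exponent (∀ i, ZMod (q i)) = q i₀ := by
    rw [hexp_pi]
    apply Nat.dvd_antisymm
    · apply Finset.lcm_dvd
      intro i _
      rw [hqk i, hqk i₀]
      exact pow_dvd_pow p (hmax i)
    · exact Finset.dvd_lcm (Finset.mem_univ i₀)
  have hEGq : AddMonoid.exponent G = q i₀ := hEH.trans hEq
  have hE0 : 0 < q i₀ := hqpos i₀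
  have hEQ0 : (0 : ℚ) < ((q i₀ : ℕ) : ℚ) := by exact_mod_cast hE0
  have hcastE : ((AddMonoid.exponent G : ℕ) : ℚ) = ((q i₀ : ℕ) : ℚ) := by
    exact_mod_cast congrArg (fun x : ℕ => (x : ℚ)) hEGq
  -- N, the maximal value
  set w : ι → ℕ := fun i => p ^ (k i₀ - k i) with hwdef
  have hqw : ∀ i, q i * w i = q i₀ := by
    intro i
    rw [hqk i, hqk i₀, hwdef, ← pow_add]
    congr 1
    have := hmax i
    omega
  set N : ℕ := ∑ i, (q i - 1) * w i with hNdef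
  ext x
  simp only [Set.mem_setOf_eq]
  constructor
  · -- forward inclusion
    intro hx
    have hxG := hx
    rw [hwq] at hx
    obtain ⟨S, hne, hf, rfl⟩ := hx
    set jS : ℕ := (S.map (fun g => AddMonoid.exponent (∀ i, ZMod (q i)) / addOrderOf g)).sum
      with hjSdef
    have hcnS : crossNum S
        = (jS : ℚ) / ((AddMonoid.exponent (∀ i, ZMod (q i)) : ℕ) : ℚ) := crossNum_eq_div S
    have hEHQ : ((AddMonoid.exponent (∀ i, ZMod (q i)) : ℕ) : ℚ) = ((q i₀ : ℕ) : ℚ) := by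
      exact_mod_cast congrArg (fun x : ℕ => (x : ℚ)) hEq
    refine ⟨jS, ?_, ?_, ?_⟩
    · -- 1 ≤ jS
      obtain ⟨g, hg⟩ := Multiset.exists_mem_of_ne_zero hne
      have hd : addOrderOf g ∣ AddMonoid.exponent (∀ i, ZMod (q i)) :=
        AddMonoid.addOrder_dvd_exponent g
      have hEpos : 0 < AddMonoid.exponent (∀ i, ZMod (q i)) := by rw [hEq]; exact hE0
      have hop : 0 < addOrderOf g := by
        rcases Nat.eq_zero_or_pos (addOrderOf g) with h | h
        · rw [h] at hd
          rw [zero_dvd_iff.mp hd] at hEpos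
          exact absurd hEpos (lt_irrefl 0)
        · exact h
      have h1 : 1 ≤ AddMonoid.exponent (∀ i, ZMod (q i)) / addOrderOf g :=
        (Nat.one_le_div_iff hop).mpr (Nat.le_of_dvd hEpos hd)
      exact le_trans h1 (Multiset.single_le_sum (fun x _ => Nat.zero_le x) _
        (Multiset.mem_map_of_mem _ hg))
    · -- jS ≤ exp * kG
      have hxk : crossNum S ≤ kG := hkG.2 (by rw [hwq]; exact ⟨S, hne, hf, rfl⟩)
      rw [hcnS, hEHQ, div_le_iff₀ hEQ0] at hxk
      rw [hcastE]
      calc (jS : ℚ) ≤ kG * (q i₀ : ℕ) := hxk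
        _ = ((q i₀ : ℕ) : ℚ) * kG := by ring
    · rw [hcnS, hEHQ, hcastE]
  · -- reverse inclusion
    rintro ⟨j, hj1, hjle, rfl⟩
    -- the maximal sequence
    have hkGmem := hkG.1
    rw [hwq] at hkGmem
    obtain ⟨S₀, hS₀ne, hS₀f, hS₀k⟩ := hkGmem
    set j₀ : ℕ := (S₀.map (fun g => AddMonoid.exponent (∀ i, ZMod (q i)) / addOrderOf g)).sum
      with hj₀def
    have hcnS₀ : crossNum S₀
        = (j₀ : ℚ) / ((AddMonoid.exponent (∀ i, ZMod (q i)) : ℕ) : ℚ) := crossNum_eq_div S₀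
    have hEHQ : ((AddMonoid.exponent (∀ i, ZMod (q i)) : ℕ) : ℚ) = ((q i₀ : ℕ) : ℚ) := by
      exact_mod_cast congrArg (fun x : ℕ => (x : ℚ)) hEq
    -- j ≤ j₀
    have hjj₀ : j ≤ j₀ := by
      have h1 : (j : ℚ) ≤ (j₀ : ℚ) := by
        rw [hcastE] at hjle
        rw [← hS₀k, hcnS₀, hEHQ] at hjle
        calc (j : ℚ) ≤ ((q i₀ : ℕ) : ℚ) * ((j₀ : ℚ) / ((q i₀ : ℕ) : ℚ)) := hjle
          _ = (j₀ : ℚ) := by field_simp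
      exact_mod_cast h1
    -- j₀ ≤ N by the polynomial bound
    have hbound : j₀ ≤ N := by
      have h1 := CB.cross_bound p q hp k hqk i₀ hmax S₀ hS₀f
      have h2 : (S₀.map (fun g => p ^ k i₀ / addOrderOf g)).sum = j₀ := by
        rw [hj₀def, hEq, hqk i₀]
      rw [h2] at h1
      exact h1
    -- numeric representation
    have hwpos : ∀ i, 0 < w i := fun i => pow_pos hp.pos _
    have hwB : ∀ i, w i ≤ q i₀ := by
      intro i
      rw [hqk i₀, hwdef]
      exact Nat.pow_le_pow_right hp.pos (Nat.sub_le _ _)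
    have hNle : j ≤ q i₀ - 1 + ∑ i ∈ Finset.univ.erase i₀, (q i - 1) * w i := by
      have hsplit : ∑ i ∈ Finset.univ.erase i₀, (q i - 1) * w i + (q i₀ - 1) * w i₀ = N := by
        rw [hNdef]
        exact Finset.sum_erase_add Finset.univ _ (Finset.mem_univ i₀)
      have hwi₀ : w i₀ = 1 := by rw [hwdef]; simp
      rw [hwi₀, mul_one] at hsplit
      omega
    obtain ⟨c, mres, hcap, hout, hmle, hsum⟩ :=
      num_rep (q i₀) w (fun i => q i - 1) hwpos hwB (Finset.univ.erase i₀) j hNle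
    set cf : ι → ℕ := Function.update c i₀ mres with hcfdef
    have hcf_le : ∀ i, cf i ≤ q i - 1 := by
      intro i
      by_cases hii : i = i₀
      · subst hii; rw [hcfdef, Function.update_self]; omega
      · rw [hcfdef, Function.update_of_ne hii]; exact hcap i
    have hcfsum : ∑ i, cf i * w i = j := by
      have h1 : ∑ i ∈ Finset.univ.erase i₀, cf i * w i = ∑ i ∈ Finset.univ.erase i₀, c i * w i := by
        apply Finset.sum_congr rfl
        intro i hi
        rw [hcfdef, Function.update_of_ne (Finset.ne_of_mem_erase hi)]
      have h2 : ∑ i ∈ Finset.univ.erase i₀, cf i * w i + cf i₀ * w i₀ = ∑ i, cf i * w i :=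
        Finset.sum_erase_add Finset.univ _ (Finset.mem_univ i₀)
      have hwi₀ : w i₀ = 1 := by rw [hwdef]; simp
      have hcfi₀ : cf i₀ = mres := by rw [hcfdef, Function.update_self]
      rw [h1, hcfi₀, hwi₀, mul_one] at h2
      omega
    obtain ⟨S, hSf, hScn, hS0iff⟩ := construct q cf hcf_le hqpos
    have hSne : S ≠ 0 := by
      intro h
      have h1 := hS0iff.mp h
      have h2 : ∑ i, cf i * w i = 0 := Finset.sum_eq_zero (fun i _ => by rw [h1 i, zero_mul])
      omega
    have hcn : crossNum S = (j : ℚ) / ((AddMonoid.exponent G : ℕ) : ℚ) := by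
      rw [hScn, hcastE]
      have h1 : ∀ i, ((cf i : ℕ) : ℚ) / ((q i : ℕ) : ℚ)
          = ((cf i * w i : ℕ) : ℚ) / ((q i₀ : ℕ) : ℚ) := by
        intro i
        have hq0 : ((q i : ℕ) : ℚ) ≠ 0 := by
          have := hqpos i
          positivity
        have hw0 : ((w i : ℕ) : ℚ) ≠ 0 := by
          have := hwpos i
          positivity
        rw [← hqw i]
        push_cast
        field_simp
      rw [Finset.sum_congr rfl (fun i _ => h1 i), ← Finset.sum_div]
      congr 1
      rw [← Nat.cast_sum]
      exact_mod_cast congrArg (fun x : ℕ => (x : ℚ)) hcfsum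
    rw [hwq]
    exact ⟨S, hSne, hSf, hcn⟩
end

section
/- Let n ≥ 2. For every w ∈ W(C_n), there exists a minimal zero-sum sequence A over C_n with k(A) = w such that for every prime p dividing n there is an element g in the support of A with v_p(ord(g)) = v_p(n), where v_p denotes the p-adic valuation. -/
open Multiset Pointwise

lemma mylcm_ne_zero : ∀ s : Multiset ℕ, (∀ x ∈ s, x ≠ 0) → s.lcm ≠ 0 := by
  intro s
  induction s using Multiset.induction with
  | empty => intro _; simp [Multiset.lcm_zero]
  | cons a s ih =>
    intro h
    rw [Multiset.lcm_cons]
    have ha : a ≠ 0 := h a (Multiset.mem_cons_self a s)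
    have hs : s.lcm ≠ 0 := ih (fun x hx => h x (Multiset.mem_cons_of_mem hx))
    rw [lcm_eq_nat_lcm]
    exact Nat.lcm_ne_zero ha hs

lemma mylcm_extract (p a : ℕ) (hp : p.Prime) (ha : a ≠ 0) :
    ∀ s : Multiset ℕ, (∀ x ∈ s, x ≠ 0) → p ^ a ∣ s.lcm → ∃ x ∈ s, p ^ a ∣ x := by
  intro s
  induction s using Multiset.induction with
  | empty =>
    intro _ hd
    rw [Multiset.lcm_zero] at hd
    have hp1 : p ∣ 1 := dvd_trans (dvd_pow_self p ha) hd
    have := Nat.le_of_dvd one_pos hp1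
    have := hp.two_le
    omega
  | cons b s ih =>
    intro h0 hd
    have hb : b ≠ 0 := h0 b (Multiset.mem_cons_self b s)
    have hs0 : ∀ x ∈ s, x ≠ 0 := fun x hx => h0 x (Multiset.mem_cons_of_mem hx)
    have hs : s.lcm ≠ 0 := mylcm_ne_zero s hs0
    rw [Multiset.lcm_cons, lcm_eq_nat_lcm] at hd
    have hlne : Nat.lcm b s.lcm ≠ 0 := Nat.lcm_ne_zero hb hs
    have := (hp.pow_dvd_iff_le_factorization hlne).mp hd
    rw [Nat.factorization_lcm hb hs] at this
    rcases le_sup_iff.mp (by simpa using this) with h | h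
    · exact ⟨b, Multiset.mem_cons_self b s,
        (hp.pow_dvd_iff_le_factorization hb).mpr h⟩
    · obtain ⟨x, hx, hdx⟩ := ih hs0 ((hp.pow_dvd_iff_le_factorization hs).mpr h)
      exact ⟨x, Multiset.mem_cons_of_mem hx, hdx⟩

lemma exists_h (n p k : ℕ) [NeZero n] (hp : p.Prime) (g : ZMod n) (hg : addOrderOf g = k)
    (hdvd : p * k ∣ n) : ∃ h : ZMod n, addOrderOf h = p * k ∧ p • h = g := by
  have n0 : n ≠ 0 := NeZero.ne n
  have k0 : k ≠ 0 := by rw [← hg]; exact (addOrderOf_pos g).ne'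
  have kpos : 0 < k := Nat.pos_of_ne_zero k0
  have hpn : p ∣ n := dvd_trans (dvd_mul_right p k) hdvd
  -- p divides g.val
  have hgv : ((g.val : ℕ) : ZMod n) = g := ZMod.natCast_zmod_val g
  have hordv : k = n / n.gcd g.val := by
    have h2 := ZMod.addOrderOf_coe g.val n0
    rw [hgv, hg] at h2
    exact h2
  have hgcd_dvd : n.gcd g.val ∣ n := Nat.gcd_dvd_left _ _
  have hkg : k * n.gcd g.val = n := by
    rw [hordv]; exact Nat.div_mul_cancel hgcd_dvd
  have hgcd_eq : n.gcd g.val = n / k := by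
    rw [hordv]
    exact (Nat.div_div_self hgcd_dvd n0).symm
  have hpnk : p ∣ n / k := by
    obtain ⟨c, hc⟩ := hdvd
    rw [hc, mul_comm p k, mul_assoc, Nat.mul_div_cancel_left _ kpos]
    exact dvd_mul_right p c
  have hpval : p ∣ g.val := by
    refine dvd_trans ?_ (Nat.gcd_dvd_right n g.val)
    rw [hgcd_eq]; exact hpnk
  -- the basic preimage
  set h₀ : ZMod n := ((g.val / p : ℕ) : ZMod n) with hh₀
  have hph₀ : p • h₀ = g := by
    rw [hh₀, nsmul_eq_mul, ← Nat.cast_mul, Nat.mul_div_cancel' hpval, hgv]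
  -- the order of h₀ is k or p*k
  have hkd : k ∣ addOrderOf h₀ := by
    rw [← hg]
    apply addOrderOf_dvd_of_nsmul_eq_zero
    rw [← hph₀, smul_comm, addOrderOf_nsmul_eq_zero, smul_zero]
  have hdpk : addOrderOf h₀ ∣ p * k := by
    apply addOrderOf_dvd_of_nsmul_eq_zero
    rw [mul_comm, mul_smul, hph₀, ← hg, addOrderOf_nsmul_eq_zero]
  obtain ⟨c, hc⟩ := hkd
  have hcp : c ∣ p := by
    rw [hc, mul_comm p k] at hdpk
    exact (Nat.mul_dvd_mul_iff_left kpos).mp hdpk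
  rcases (hp.eq_one_or_self_of_dvd c hcp) with h1 | h1
  · -- addOrderOf h₀ = k : fix up by adding an element of order p
    rw [h1, mul_one] at hc
    have hpk : ¬ p ∣ k := by
      intro hpk
      have h2 : addOrderOf (p • h₀) = addOrderOf h₀ / (addOrderOf h₀).gcd p :=
        addOrderOf_nsmul h₀
      rw [hph₀, hg, hc] at h2
      rw [Nat.gcd_eq_right hpk] at h2
      have := Nat.div_lt_self kpos hp.one_lt
      omega
    have hordc : addOrderOf ((n / p : ℕ) : ZMod n) = p := by
      rw [ZMod.addOrderOf_coe _ n0, Nat.gcd_eq_right (Nat.div_dvd_of_dvd hpn),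
        Nat.div_div_self hpn n0]
    have hcop : (addOrderOf h₀).Coprime (addOrderOf ((n / p : ℕ) : ZMod n)) := by
      rw [hordc, hc]
      exact (Nat.coprime_comm.mp ((hp.coprime_iff_not_dvd).mpr hpk))
    refine ⟨h₀ + ((n / p : ℕ) : ZMod n), ?_, ?_⟩
    · rw [(AddCommute.all h₀ _).addOrderOf_add_eq_mul_addOrderOf_of_coprime hcop,
        hc, hordc, mul_comm]
    · rw [smul_add, hph₀, ← Nat.cast_smul_eq_nsmul (ZMod n), Nat.cast_smul_eq_nsmul,
        nsmul_eq_mul, ← Nat.cast_mul, Nat.mul_div_cancel' hpn, ZMod.natCast_self,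
        add_zero]
  · exact ⟨h₀, by rw [hc, h1, mul_comm], hph₀⟩

lemma smul_sum_eq_zero {G : Type*} [AddCommGroup G] (L : ℕ) :
    ∀ T : Multiset G, (∀ x ∈ T, L • x = 0) → L • T.sum = 0 := by
  intro T
  induction T using Multiset.induction with
  | empty => simp
  | cons b s ih =>
    intro h
    rw [Multiset.sum_cons, smul_add, h b (Multiset.mem_cons_self b s),
      ih (fun x hx => h x (Multiset.mem_cons_of_mem hx)), add_zero]

lemma ordLcm_dvd (n : ℕ) [NeZero n] (S : Multiset (ZMod n)) :
    (S.map addOrderOf).lcm ∣ n := by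
  rw [Multiset.lcm_dvd]
  intro b hb
  obtain ⟨x, _, rfl⟩ := Multiset.mem_map.mp hb
  have := addOrderOf_dvd_card (x := x)
  rwa [ZMod.card] at this

lemma ord_ne_zero (n : ℕ) [NeZero n] (S : Multiset (ZMod n)) :
    ∀ b ∈ S.map addOrderOf, b ≠ 0 := by
  intro b hb
  obtain ⟨x, _, rfl⟩ := Multiset.mem_map.mp hb
  exact (addOrderOf_pos x).ne'

lemma step (n : ℕ) [NeZero n] (S : Multiset (ZMod n)) (hS : IsMinZeroSum S)
    (p : ℕ) (hp : p.Prime) (hpd : p ∣ n / (S.map addOrderOf).lcm) :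
    ∃ A : Multiset (ZMod n), IsMinZeroSum A ∧ crossNum A = crossNum S ∧
      (S.map addOrderOf).lcm ∣ (A.map addOrderOf).lcm ∧
      (A.map addOrderOf).lcm ≠ (S.map addOrderOf).lcm := by
  classical
  have n0 : n ≠ 0 := NeZero.ne n
  set L := (S.map addOrderOf).lcm with hL
  have hLn : L ∣ n := ordLcm_dvd n S
  have L0 : L ≠ 0 := fun h => n0 (by simpa [h] using hLn)
  set a := L.factorization p with ha
  -- choose g with maximal p-valuation of order
  obtain ⟨g, hgS, hgk⟩ : ∃ g ∈ S, p ^ a ∣ addOrderOf g := by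
    rcases Nat.eq_zero_or_pos a with h0 | hpos
    · obtain ⟨g, hg⟩ := Multiset.exists_mem_of_ne_zero hS.1
      exact ⟨g, hg, by simp [h0]⟩
    · have hdl : p ^ a ∣ L := Nat.ordProj_dvd L p
      obtain ⟨b, hb, hdb⟩ := mylcm_extract p a hp hpos.ne' (S.map addOrderOf)
        (ord_ne_zero n S) hdl
      obtain ⟨g, hgS, rfl⟩ := Multiset.mem_map.mp hb
      exact ⟨g, hgS, hdb⟩
  set k := addOrderOf g with hk
  have kpos : 0 < k := addOrderOf_pos g
  have hkL : k ∣ L := Multiset.dvd_lcm (Multiset.mem_map_of_mem _ hgS)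
  have hpLn : p * L ∣ n := by
    have h1 : L * (n / L) = n := Nat.mul_div_cancel' hLn
    have h2 : L * p ∣ L * (n / L) := mul_dvd_mul_left L hpd
    rwa [h1, mul_comm L p] at h2
  have hpkn : p * k ∣ n := dvd_trans (mul_dvd_mul_left p hkL) hpLn
  obtain ⟨h, hordh, hph⟩ := exists_h n p k hp g rfl hpkn
  set E := S.erase g with hE
  set A := Multiset.replicate p h + E with hA
  have hSE : g ::ₘ E = S := Multiset.cons_erase hgS
  have sumS : g + E.sum = 0 := by
    rw [← Multiset.sum_cons, hSE]; exact hS.2.1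
  have ppos : 0 < p := hp.pos
  have hnotp1 : ¬ p ^ (a + 1) ∣ L := Nat.pow_succ_factorization_not_dvd L0 hp
  have hpk1 : p ^ (a + 1) ∣ p * k := by
    rw [pow_succ, mul_comm (p ^ a) p]
    exact mul_dvd_mul_left p hgk
  -- A is a minimal zero-sum sequence
  have hAmin : IsMinZeroSum A := by
    refine ⟨?_, ?_, ?_⟩
    · intro h0
      have hcard : Multiset.card A = p + Multiset.card E := by
        rw [hA, Multiset.card_add, Multiset.card_replicate]
      rw [h0] at hcard
      simp at hcard
      omega
    · rw [hA, Multiset.sum_add, Multiset.sum_replicate, hph]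
      exact sumS
    · intro T hTlt hT0 hTsum
      have hTle : T ≤ A := hTlt.le
      set T₁ := T - E with hT₁def
      have hT₁ : T₁ ≤ Multiset.replicate p h := by
        rw [hT₁def, Multiset.sub_le_iff_le_add]
        exact hTle
      have hT₁T : T₁ ≤ T := Multiset.sub_le_self T E
      set T₂ := T - T₁ with hT₂def
      have hsplit : T₂ + T₁ = T := tsub_add_cancel_of_le hT₁T
      have hT₂E : T₂ ≤ E := by
        rw [Multiset.le_iff_count]
        intro x
        rw [hT₂def, Multiset.count_sub, hT₁def, Multiset.count_sub]
        have := Multiset.count_le_of_le x hTle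
        rw [hA, Multiset.count_add] at this
        omega
      set j := Multiset.card T₁ with hj
      have hT₁rep : T₁ = Multiset.replicate j h :=
        Multiset.eq_replicate_card.mpr
          (fun b hb => Multiset.eq_of_mem_replicate (Multiset.mem_of_le hT₁ hb))
      have hjp : j ≤ p := by
        have := Multiset.card_le_card hT₁
        rwa [Multiset.card_replicate] at this
      have hsum : T₂.sum + j • h = 0 := by
        rw [← hTsum, ← hsplit, Multiset.sum_add, hT₁rep, Multiset.sum_replicate]
      have hELt : E < S := by rw [← hSE]; exact Multiset.lt_cons_self E g
      rcases Nat.lt_or_ge j p with hjlt | hjge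
      · rcases Nat.eq_zero_or_pos j with hj0 | hjpos
        · -- j = 0 : T is a zero-sum subsequence of E, contradiction
          have hT₁0 : T₁ = 0 := by rw [hT₁rep, hj0, Multiset.replicate_zero]
          have hTT₂ : T = T₂ := by rw [← hsplit, hT₁0, add_zero]
          exact hS.2.2 T (lt_of_le_of_lt (hTT₂ ▸ hT₂E) hELt) hT0 hTsum
        · -- 0 < j < p : valuation contradiction
          exfalso
          have hkill : L • T₂.sum = 0 := by
            apply smul_sum_eq_zero
            intro x hx
            have hxS : x ∈ S := Multiset.mem_of_le (le_trans hT₂E (Multiset.erase_le g S)) hx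
            have : addOrderOf x ∣ L := Multiset.dvd_lcm (Multiset.mem_map_of_mem _ hxS)
            exact (addOrderOf_dvd_iff_nsmul_eq_zero.mp this)
          have hjh : T₂.sum = -(j • h) := eq_neg_of_add_eq_zero_left hsum
          rw [hjh, smul_neg, neg_eq_zero, smul_smul] at hkill
          have hdvd2 : p * k ∣ L * j := by
            rw [← hordh]
            exact addOrderOf_dvd_of_nsmul_eq_zero hkill
          have hpj : ¬ p ∣ j := by
            intro hpj
            exact absurd (Nat.le_of_dvd hjpos hpj) (not_le.mpr hjlt)
          have hcop : (p ^ (a + 1)).Coprime j :=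
            Nat.Coprime.pow_left _ ((hp.coprime_iff_not_dvd).mpr hpj)
          exact hnotp1 (hcop.dvd_of_dvd_mul_right (dvd_trans hpk1 hdvd2))
      · -- j = p
        have hjeq : j = p := le_antisymm hjp hjge
        have hT₂ne : T₂ ≠ E := by
          intro hT₂eq
          apply hTlt.ne
          rw [← hsplit, hT₂eq, hT₁rep, hjeq, hA, add_comm]
        have hU : (g ::ₘ T₂) < S := by
          rw [← hSE]
          exact lt_of_le_of_ne (Multiset.cons_le_cons g hT₂E)
            (fun hc => hT₂ne (Multiset.cons_inj_right g |>.mp hc))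
        refine hS.2.2 (g ::ₘ T₂) hU (Multiset.cons_ne_zero) ?_
        rw [Multiset.sum_cons, ← hph, ← hjeq, add_comm]
        exact hsum
  refine ⟨A, hAmin, ?_, ?_, ?_⟩
  · -- cross numbers agree
    have hcA : crossNum A
        = p • ((1 : ℚ) / ((p * k : ℕ) : ℚ)) + crossNum E := by
      rw [hA, crossNum, Multiset.map_add, Multiset.sum_add, Multiset.map_replicate,
        Multiset.sum_replicate, hordh]
      rfl
    have hcS : crossNum S = (1 : ℚ) / (k : ℚ) + crossNum E := by
      rw [← hSE, crossNum, Multiset.map_cons, Multiset.sum_cons]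
      rfl
    rw [hcA, hcS]
    congr 1
    have hpQ : (p : ℚ) ≠ 0 := Nat.cast_ne_zero.mpr ppos.ne'
    have hkQ : (k : ℚ) ≠ 0 := Nat.cast_ne_zero.mpr kpos.ne'
    rw [nsmul_eq_mul, Nat.cast_mul]
    field_simp
  · -- L divides the new lcm
    rw [Multiset.lcm_dvd]
    intro b hb
    obtain ⟨x, hxS, rfl⟩ := Multiset.mem_map.mp hb
    rw [← hSE, Multiset.mem_cons] at hxS
    rcases hxS with rfl | hxE
    · refine dvd_trans (dvd_mul_left k p) ?_
      rw [← hordh]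
      refine Multiset.dvd_lcm (Multiset.mem_map_of_mem _ ?_)
      rw [hA, Multiset.mem_add]
      exact Or.inl (Multiset.mem_replicate.mpr ⟨ppos.ne', rfl⟩)
    · exact Multiset.dvd_lcm (Multiset.mem_map_of_mem _
        (by rw [hA, Multiset.mem_add]; exact Or.inr hxE))
  · -- the new lcm is different
    intro hEq
    apply hnotp1
    rw [← hEq]
    refine dvd_trans hpk1 ?_
    rw [← hordh]
    refine Multiset.dvd_lcm (Multiset.mem_map_of_mem _ ?_)
    rw [hA, Multiset.mem_add]
    exact Or.inl (Multiset.mem_replicate.mpr ⟨ppos.ne', rfl⟩)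

lemma mainstep (n : ℕ) (hn : 2 ≤ n) :
    ∀ t : ℕ, ∀ S : Multiset (ZMod n), IsMinZeroSum S →
      n / (S.map addOrderOf).lcm = t →
      ∃ A : Multiset (ZMod n), IsMinZeroSum A ∧ crossNum A = crossNum S ∧
        n ∣ (A.map addOrderOf).lcm := by
  haveI : NeZero n := ⟨by omega⟩
  have n0 : n ≠ 0 := NeZero.ne n
  intro t
  induction t using Nat.strong_induction_on with
  | _ t ih =>
    intro S hS ht
    by_cases hnd : n ∣ (S.map addOrderOf).lcm
    · exact ⟨S, hS, rfl, hnd⟩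
    · set L := (S.map addOrderOf).lcm with hL
      have hLn : L ∣ n := ordLcm_dvd n S
      have L0 : L ≠ 0 := fun h0 => n0 (by simpa [h0] using hLn)
      have hnL1 : n / L ≠ 1 := by
        intro h1
        apply hnd
        have := Nat.div_mul_cancel hLn
        rw [h1, one_mul] at this
        exact this ▸ dvd_refl n
      obtain ⟨p, hp, hpd⟩ := Nat.exists_prime_and_dvd hnL1
      obtain ⟨A', hA'min, hA'cross, hLL', hL'ne⟩ := step n S hS p hp hpd
      set L' := (A'.map addOrderOf).lcm with hL'
      have hL'n : L' ∣ n := ordLcm_dvd n A'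
      have L'0 : L' ≠ 0 := fun h0 => n0 (by simpa [h0] using hL'n)
      have hLL'lt : L < L' :=
        lt_of_le_of_ne (Nat.le_of_dvd (Nat.pos_of_ne_zero L'0) hLL') (Ne.symm hL'ne)
      have hmeas : n / L' < t := by
        rw [← ht]
        obtain ⟨d, hd⟩ := hL'n
        obtain ⟨c, hc⟩ := hLL'
        have hdL : n = L * (c * d) := by rw [hd, hc]; ring
        have hc2 : 2 ≤ c := by
          rcases c with _ | _ | c
          · omega
          · omega
          · omega
        have h1 : n / L' = d := by rw [hd, Nat.mul_div_cancel_left _ (Nat.pos_of_ne_zero L'0)]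
        have h2 : n / L = c * d := by rw [hdL, Nat.mul_div_cancel_left _ (Nat.pos_of_ne_zero L0)]
        have hd0 : d ≠ 0 := by rintro rfl; rw [hd, mul_zero] at n0; exact n0 rfl
        rw [h1, h2]
        calc d < 2 * d := by omega
        _ ≤ c * d := Nat.mul_le_mul_right d hc2
      obtain ⟨A, hAmin, hAcross, hAn⟩ := ih (n / L') hmeas A' hA'min rfl
      exact ⟨A, hAmin, by rw [hAcross, hA'cross], hAn⟩

theorem stmt7 (n : ℕ) (hn : 2 ≤ n) :
    ∀ w ∈ WSet (ZMod n), ∃ A : Multiset (ZMod n), IsMinZeroSum A ∧ crossNum A = w ∧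
      ∀ p : ℕ, p.Prime → p ∣ n →
        ∃ g ∈ A, padicValNat p (addOrderOf g) = padicValNat p n := by
  haveI : NeZero n := ⟨by omega⟩
  have n0 : n ≠ 0 := NeZero.ne n
  rintro w ⟨S, hSmin, hScross⟩
  obtain ⟨A, hAmin, hAcross, hAn⟩ := mainstep n hn (n / (S.map addOrderOf).lcm) S hSmin rfl
  refine ⟨A, hAmin, by rw [hAcross, hScross], ?_⟩
  intro p hp hpn
  have ha1 : n.factorization p ≠ 0 := by
    have := (Nat.Prime.factorization_pos_of_dvd hp n0 hpn)
    omega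
  have hdl : p ^ n.factorization p ∣ (A.map addOrderOf).lcm :=
    dvd_trans (Nat.ordProj_dvd n p) hAn
  obtain ⟨b, hb, hdb⟩ := mylcm_extract p (n.factorization p) hp ha1
    (A.map addOrderOf) (ord_ne_zero n A) hdl
  obtain ⟨g, hgA, rfl⟩ := Multiset.mem_map.mp hb
  refine ⟨g, hgA, ?_⟩
  have hordn : addOrderOf g ∣ n := by
    have := addOrderOf_dvd_card (x := g)
    rwa [ZMod.card] at this
  have hordne : addOrderOf g ≠ 0 := (addOrderOf_pos g).ne'
  have hge : n.factorization p ≤ (addOrderOf g).factorization p :=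
    (hp.pow_dvd_iff_le_factorization hordne).mp hdb
  have hle : (addOrderOf g).factorization p ≤ n.factorization p := by
    refine (hp.pow_dvd_iff_le_factorization n0).mp ?_
    exact dvd_trans (Nat.ordProj_dvd _ p) hordn
  have heq : (addOrderOf g).factorization p = n.factorization p := le_antisymm hle hge
  rwa [Nat.factorization_def _ hp, Nat.factorization_def _ hp] at heq
end

section
/- Let G be a cyclic group of order p^k generated by f, where p is an odd prime and k ≥ 1. Then: (1) for each j ∈ [1, p^k − 1] there exists a non-trivial zero-sum free sequence S_j over G with σ(S_j) = −f and k(S_j) = j/p^k; (2) for each j ∈ [1, p^k − 2] there exists a non-trivial zero-sum free sequence T_j over G with σ(T_j) = −2f, −f ∉ Σ(T_j), and k(T_j) = j/p^k. -/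
open Multiset Pointwise

lemma exists_map_le' {α β : Type*} (g : α → β) (C : Multiset α) :
    ∀ T : Multiset β, T ≤ C.map g → ∃ D, D ≤ C ∧ T = D.map g := by
  classical
  induction C using Multiset.induction with
  | empty =>
    intro T hT
    rw [Multiset.map_zero, Multiset.le_zero] at hT
    exact ⟨0, le_refl _, by simp [hT]⟩
  | cons a C ih =>
    intro T hT
    rw [Multiset.map_cons] at hT
    by_cases h : g a ∈ T
    · have h1 : T.erase (g a) ≤ Multiset.map g C := by
        have := Multiset.erase_le_erase (g a) hT
        rwa [Multiset.erase_cons_head] at this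
      obtain ⟨D, hD, hTD⟩ := ih _ h1
      exact ⟨a ::ₘ D, Multiset.cons_le_cons _ hD, by
        rw [Multiset.map_cons, ← hTD, Multiset.cons_erase h]⟩
    · have h1 : T ≤ Multiset.map g C := by
        rw [Multiset.le_iff_count]
        intro x
        have hx' := Multiset.le_iff_count.mp hT x
        rcases eq_or_ne x (g a) with rfl | hx
        · simp [Multiset.count_eq_zero_of_notMem h]
        · rwa [Multiset.count_cons_of_ne hx] at hx'
      obtain ⟨D, hD, hTD⟩ := ih _ h1
      exact ⟨D, le_trans hD (Multiset.le_cons_self _ _), hTD⟩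

lemma sum_map_nsmul' {G : Type*} [AddCommGroup G] (C : Multiset ℕ) (f : G) :
    (C.map (fun a => a • f)).sum = C.sum • f := by
  induction C using Multiset.induction with
  | empty => simp
  | cons a C ih => simp [ih, add_nsmul]

lemma sum_mono_nat' {D C : Multiset ℕ} (h : D ≤ C) : D.sum ≤ C.sum := by
  obtain ⟨E, rfl⟩ := Multiset.le_iff_exists_add.mp h
  simp

lemma key' {G : Type*} [AddCommGroup G] (f : G) (n : ℕ) (hf : addOrderOf f = n)
    (C : Multiset ℕ) (hC : C ≠ 0)
    (hpos : ∀ a ∈ C, 1 ≤ a) (hcop : ∀ a ∈ C, Nat.Coprime n a)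
    (hsum : C.sum < n) :
    ∃ S : Multiset G, S ≠ 0 ∧ IsZeroSumFree S ∧ S.sum = C.sum • f ∧
      (∀ U : Multiset G, U ≤ S → U ≠ 0 → ∃ m, 1 ≤ m ∧ m ≤ C.sum ∧ U.sum = m • f) ∧
      crossNum S = (C.card : ℚ) / (n : ℚ) := by
  refine ⟨C.map (fun a => a • f), ?_, ?_, sum_map_nsmul' C f, ?_, ?_⟩
  · simpa using hC
  · intro T hT hT0
    obtain ⟨D, hD, rfl⟩ := exists_map_le' _ C T hT
    have hD0 : D ≠ 0 := by rintro rfl; simp at hT0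
    rw [sum_map_nsmul']
    intro h0
    have hdvd : n ∣ D.sum := by
      rw [← hf]; exact addOrderOf_dvd_of_nsmul_eq_zero h0
    have h1 : 1 ≤ D.sum := by
      obtain ⟨a, ha⟩ := Multiset.exists_mem_of_ne_zero hD0
      calc 1 ≤ a := hpos a (Multiset.mem_of_le hD ha)
        _ ≤ D.sum := Multiset.single_le_sum (fun _ _ => Nat.zero_le _) _ ha
    have h2 : D.sum ≤ C.sum := sum_mono_nat' hD
    have := Nat.le_of_dvd (by omega) hdvd
    omega
  · intro U hU hU0
    obtain ⟨D, hD, rfl⟩ := exists_map_le' _ C U hU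
    have hD0 : D ≠ 0 := by rintro rfl; simp at hU0
    obtain ⟨a, ha⟩ := Multiset.exists_mem_of_ne_zero hD0
    refine ⟨D.sum, ?_, sum_mono_nat' hD, sum_map_nsmul' D f⟩
    calc 1 ≤ a := hpos a (Multiset.mem_of_le hD ha)
      _ ≤ D.sum := Multiset.single_le_sum (fun _ _ => Nat.zero_le _) _ ha
  · unfold crossNum
    rw [Multiset.map_map]
    have hmc : C.map ((fun g : G => (1 : ℚ) / (addOrderOf g : ℚ)) ∘ (fun a : ℕ => a • f))
        = C.map (fun _ => (1 : ℚ) / (n : ℚ)) := by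
      apply Multiset.map_congr rfl
      intro a ha
      have hord : addOrderOf (a • f) = n := by
        rw [← hf]
        exact (hf ▸ hcop a ha).addOrderOf_nsmul
      simp [Function.comp, hord]
    rw [hmc, Multiset.map_const', Multiset.sum_replicate, nsmul_eq_mul]
    ring

lemma exists_C' (p s j : ℕ) (hp3 : 3 ≤ p) (h1 : 1 ≤ j) (hjs : j ≤ s)
    (h2 : p ∣ (s - j + 1) → 2 ≤ j) :
    ∃ C : Multiset ℕ, C ≠ 0 ∧ C.card = j ∧ C.sum = s ∧
      (∀ a ∈ C, 1 ≤ a) ∧ (∀ a ∈ C, ¬ p ∣ a) := by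
  have hnd : ∀ a : ℕ, 0 < a → a < p → ¬ p ∣ a := by
    intro a h0 hlt hd
    exact absurd (Nat.le_of_dvd h0 hd) (by omega)
  by_cases h : p ∣ (s - j + 1)
  · have hj2 : 2 ≤ j := h2 h
    have hp' : p ≤ s - j + 1 := Nat.le_of_dvd (by omega) h
    refine ⟨Multiset.replicate (j-2) 1 + (2 ::ₘ {s - j}), ?_, ?_, ?_, ?_, ?_⟩
    · intro hc
      have := congrArg Multiset.card hc
      simp [Multiset.card_replicate] at this
    · rw [Multiset.card_add, Multiset.card_replicate, Multiset.card_cons,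
        Multiset.card_singleton]
      omega
    · rw [Multiset.sum_add, Multiset.sum_replicate, Multiset.sum_cons,
        Multiset.sum_singleton, smul_eq_mul]
      omega
    · intro a ha
      rw [Multiset.mem_add] at ha
      rcases ha with ha | ha
      · rw [Multiset.eq_of_mem_replicate ha]
      · rw [Multiset.mem_cons, Multiset.mem_singleton] at ha
        rcases ha with rfl | rfl <;> omega
    · intro a ha
      rw [Multiset.mem_add] at ha
      rcases ha with ha | ha
      · rw [Multiset.eq_of_mem_replicate ha]
        exact hnd 1 one_pos (by omega)
      · rw [Multiset.mem_cons, Multiset.mem_singleton] at ha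
        rcases ha with rfl | rfl
        · exact hnd 2 two_pos (by omega)
        · intro hd
          have hd1 : p ∣ 1 := by
            have := Nat.dvd_sub h hd
            rwa [show s - j + 1 - (s - j) = 1 by omega] at this
          exact absurd (Nat.le_of_dvd one_pos hd1) (by omega)
  · refine ⟨Multiset.replicate (j-1) 1 + {s - j + 1}, ?_, ?_, ?_, ?_, ?_⟩
    · intro hc
      have := congrArg Multiset.card hc
      simp [Multiset.card_replicate] at this
    · rw [Multiset.card_add, Multiset.card_replicate, Multiset.card_singleton]
      omega
    · rw [Multiset.sum_add, Multiset.sum_replicate, Multiset.sum_singleton, smul_eq_mul]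
      omega
    · intro a ha
      rw [Multiset.mem_add] at ha
      rcases ha with ha | ha
      · rw [Multiset.eq_of_mem_replicate ha]
      · rw [Multiset.mem_singleton] at ha
        omega
    · intro a ha
      rw [Multiset.mem_add] at ha
      rcases ha with ha | ha
      · rw [Multiset.eq_of_mem_replicate ha]
        exact hnd 1 one_pos (by omega)
      · rw [Multiset.mem_singleton] at ha
        subst ha
        exact h

theorem stmt9 (p k : ℕ) (hp : p.Prime) (hodd : Odd p) (hk : 1 ≤ k)
    (G : Type*) [AddCommGroup G] (f : G) (hf : addOrderOf f = p ^ k)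
    (hgen : AddSubgroup.closure {f} = (⊤ : AddSubgroup G)) :
    (∀ j : ℕ, 1 ≤ j → j ≤ p ^ k - 1 →
      ∃ S : Multiset G, S ≠ 0 ∧ IsZeroSumFree S ∧ S.sum = -f ∧
        crossNum S = (j : ℚ) / (p ^ k : ℚ)) ∧
    (∀ j : ℕ, 1 ≤ j → j ≤ p ^ k - 2 →
      ∃ T : Multiset G, T ≠ 0 ∧ IsZeroSumFree T ∧ T.sum = -(f + f) ∧
        (∀ U : Multiset G, U ≤ T → U ≠ 0 → U.sum ≠ -f) ∧
        crossNum T = (j : ℚ) / (p ^ k : ℚ)) := by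
  have hp2 : 2 ≤ p := hp.two_le
  have hpodd : p % 2 = 1 := Nat.odd_iff.mp hodd
  have hp3 : 3 ≤ p := by omega
  have hpn : p ∣ p ^ k := dvd_pow_self p (by omega)
  have hnp : p ≤ p ^ k := Nat.le_self_pow (by omega) p
  have hn3 : 3 ≤ p ^ k := le_trans hp3 hnp
  set n := p ^ k with hn
  have hcop : ∀ a : ℕ, ¬ p ∣ a → Nat.Coprime n a := by
    intro a ha
    exact Nat.Coprime.pow_left _ (hp.coprime_iff_not_dvd.mpr ha)
  have hnf : n • f = 0 := by rw [← hf]; exact addOrderOf_nsmul_eq_zero f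
  constructor
  · intro j hj1 hj2
    have hpj : p ∣ (n - 1 - j + 1) → 2 ≤ j := by
      intro hd
      by_contra hlt
      have hj : j = 1 := by omega
      subst hj
      rw [show n - 1 - 1 + 1 = n - 1 by omega] at hd
      have h1 : p ∣ 1 := by
        have := Nat.dvd_sub hpn hd
        rwa [show n - (n - 1) = 1 by omega] at this
      exact absurd (Nat.le_of_dvd one_pos h1) (by omega)
    obtain ⟨C, hC0, hCcard, hCsum, hCpos, hCnd⟩ :=
      exists_C' p (n - 1) j hp3 hj1 (by omega) hpj
    obtain ⟨S, hS0, hSfree, hSsum, _, hScross⟩ :=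
      key' f n hf C hC0 hCpos (fun a ha => hcop a (hCnd a ha)) (by omega)
    refine ⟨S, hS0, hSfree, ?_, ?_⟩
    · rw [hSsum, hCsum]
      have hadd : (n - 1) • f + f = 0 := by
        rw [← succ_nsmul, show n - 1 + 1 = n by omega, hnf]
      exact eq_neg_of_add_eq_zero_left hadd
    · rw [hScross, hCcard, hn]
      push_cast
      ring
  · intro j hj1 hj2
    have hpj : p ∣ (n - 2 - j + 1) → 2 ≤ j := by
      intro hd
      by_contra hlt
      have hj : j = 1 := by omega
      subst hj
      rw [show n - 2 - 1 + 1 = n - 2 by omega] at hd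
      have h1 : p ∣ 2 := by
        have := Nat.dvd_sub hpn hd
        rwa [show n - (n - 2) = 2 by omega] at this
      exact absurd (Nat.le_of_dvd two_pos h1) (by omega)
    obtain ⟨C, hC0, hCcard, hCsum, hCpos, hCnd⟩ :=
      exists_C' p (n - 2) j hp3 hj1 (by omega) hpj
    obtain ⟨S, hS0, hSfree, hSsum, hSsub, hScross⟩ :=
      key' f n hf C hC0 hCpos (fun a ha => hcop a (hCnd a ha)) (by omega)
    refine ⟨S, hS0, hSfree, ?_, ?_, ?_⟩
    · rw [hSsum, hCsum]
      have hadd : (n - 2) • f + 2 • f = 0 := by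
        rw [← add_nsmul, show n - 2 + 2 = n by omega, hnf]
      rw [two_nsmul] at hadd
      exact eq_neg_of_add_eq_zero_left hadd
    · intro U hU hU0 hUsum
      obtain ⟨m, hm1, hm2, hm⟩ := hSsub U hU hU0
      rw [hm] at hUsum
      have hz : (m + 1) • f = 0 := by
        rw [succ_nsmul, hUsum]
        simp
      have hdvd : n ∣ m + 1 := by
        rw [← hf]; exact addOrderOf_dvd_of_nsmul_eq_zero hz
      have := Nat.le_of_dvd (by omega) hdvd
      rw [hCsum] at hm2
      omega
    · rw [hScross, hCcard, hn]
      push_cast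
      ring
end

section
/- Let G = C_{2p^k} with p prime and k ≥ 1. Then w(G) = (1/(2p^k))·[1, 3p^k − 2], i.e. the set of cross numbers of non-trivial zero-sum free sequences over G is exactly the set of all j/(2p^k) with 1 ≤ j ≤ 3p^k − 2. -/
open Multiset Pointwise

section Aux

variable {G : Type*} [AddCommGroup G]

lemma zsf_of_le {S T : Multiset G} (h : T ≤ S) (hS : IsZeroSumFree S) : IsZeroSumFree T :=
  fun U hU hU0 => hS U (le_trans hU h) hU0

lemma le_cons_elim [DecidableEq G] {T M : Multiset G} {a : G} (h : T ≤ a ::ₘ M) :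
    T ≤ M ∨ ∃ T', T' ≤ M ∧ T = a ::ₘ T' := by
  by_cases ha : a ∈ T
  · exact Or.inr ⟨T.erase a, Multiset.erase_le_iff_le_cons.mpr h, (Multiset.cons_erase ha).symm⟩
  · left
    rw [Multiset.le_iff_count] at h ⊢
    intro x
    have hx := h x
    rw [Multiset.count_cons] at hx
    by_cases hxa : x = a
    · subst hxa; simp [Multiset.count_eq_zero_of_notMem ha]
    · simpa [hxa] using hx

lemma zsf_fuse [DecidableEq G] {a b : G} {R : Multiset G} (h : IsZeroSumFree (a ::ₘ b ::ₘ R)) :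
    IsZeroSumFree ((a + b) ::ₘ R) := by
  intro T hT hT0 hsum
  rcases le_cons_elim hT with hTR | ⟨T', hT', rfl⟩
  · exact h T (le_trans hTR (le_trans (Multiset.le_cons_self _ _)
      (Multiset.cons_le_cons _ (Multiset.le_cons_self _ _)))) hT0 hsum
  · refine h (a ::ₘ b ::ₘ T') (Multiset.cons_le_cons _ (Multiset.cons_le_cons _ hT'))
      (Multiset.cons_ne_zero) ?_
    rw [Multiset.sum_cons, Multiset.sum_cons, ← add_assoc]
    rwa [Multiset.sum_cons] at hsum

/-- condense a list by replacing consecutive pairs by their sums (dropping a leftover). -/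
def condense : List G → Multiset G
  | [] => 0
  | [_] => 0
  | a :: b :: rest => (a + b) ::ₘ condense rest

lemma zsf_condense [DecidableEq G] : ∀ (L : List G) (R : Multiset G),
    IsZeroSumFree (R + (L : Multiset G)) → IsZeroSumFree (R + condense L)
  | [], R, h => by
    rw [show condense ([] : List G) = 0 from rfl, add_zero]
    exact zsf_of_le (Multiset.le_add_right _ _) h
  | [a], R, h => by
    rw [show condense ([a] : List G) = 0 from rfl, add_zero]
    exact zsf_of_le (Multiset.le_add_right _ _) h
  | a :: b :: rest, R, h => by
    have h1 : IsZeroSumFree (a ::ₘ b ::ₘ (R + ↑rest)) := by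
      have : (R + ((a :: b :: rest : List G) : Multiset G)) = a ::ₘ b ::ₘ (R + (rest : Multiset G)) := by
        rw [← Multiset.cons_coe, ← Multiset.cons_coe, Multiset.add_cons, Multiset.add_cons]
      rwa [this] at h
    have h2 := zsf_fuse h1
    have h3 : IsZeroSumFree (((a + b) ::ₘ R) + (rest : Multiset G)) := by
      rw [Multiset.cons_add]; exact h2
    have h4 := zsf_condense rest ((a + b) ::ₘ R) h3
    rw [show condense (a :: b :: rest) = (a + b) ::ₘ condense rest from rfl, Multiset.add_cons]
    rwa [Multiset.cons_add] at h4

end Aux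

section GroupAlgebra

open AddMonoidAlgebra

variable {p N : ℕ} [Fact p.Prime]

local notation "A" => AddMonoidAlgebra (ZMod p) (ZMod N)

lemma eval_msum (s : Multiset (AddMonoidAlgebra (ZMod p) (ZMod N))) (a : ZMod N) :
    s.sum.coeff a = (s.map (fun f => f.coeff a)).sum := by
  induction s using Multiset.induction_on with
  | empty => rfl
  | cons x s ih =>
    rw [Multiset.sum_cons, Multiset.map_cons, Multiset.sum_cons, ← ih]
    rfl

lemma msum_neg {α R : Type*} [Ring R] (s : Multiset α) (f : α → R) :
    (s.map (fun x => - f x)).sum = - (s.map f).sum := by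
  induction s using Multiset.induction_on with
  | empty => simp
  | cons x t ih => simp only [Multiset.map_cons, Multiset.sum_cons, ih]; abel

lemma expand_prod (S : Multiset (ZMod N)) :
    (S.map (fun g => AddMonoidAlgebra.single g (1 : ZMod p) - 1)).prod =
      (S.powerset.map (fun T =>
        AddMonoidAlgebra.single T.sum ((-1 : ZMod p) ^ (Multiset.card S - Multiset.card T)))).sum := by
  induction S using Multiset.induction_on with
  | empty =>
    simp [AddMonoidAlgebra.one_def]
  | cons a s ih =>
    rw [Multiset.map_cons, Multiset.prod_cons, ih, sub_mul, one_mul]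
    rw [Multiset.powerset_cons, Multiset.map_add, Multiset.sum_add, Multiset.map_map]
    have h1 : AddMonoidAlgebra.single a (1 : ZMod p) *
        (Multiset.map (fun T => AddMonoidAlgebra.single T.sum
          ((-1 : ZMod p) ^ (Multiset.card s - Multiset.card T))) s.powerset).sum =
        (Multiset.map ((fun T => AddMonoidAlgebra.single T.sum
          ((-1 : ZMod p) ^ (Multiset.card (a ::ₘ s) - Multiset.card T))) ∘ (Multiset.cons a))
            s.powerset).sum := by
      rw [← Multiset.sum_map_mul_left]
      refine congrArg _ (Multiset.map_congr rfl ?_)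
      intro T hT
      simp only [Function.comp_apply, AddMonoidAlgebra.single_mul_single, one_mul,
        Multiset.sum_cons, Multiset.card_cons, Nat.succ_sub_succ]
    have h2 : (Multiset.map (fun T => AddMonoidAlgebra.single T.sum
          ((-1 : ZMod p) ^ (Multiset.card (a ::ₘ s) - Multiset.card T))) s.powerset).sum =
        - (Multiset.map (fun T => AddMonoidAlgebra.single T.sum
          ((-1 : ZMod p) ^ (Multiset.card s - Multiset.card T))) s.powerset).sum := by
      have : ∀ T ∈ s.powerset, (AddMonoidAlgebra.single T.sum
          ((-1 : ZMod p) ^ (Multiset.card (a ::ₘ s) - Multiset.card T)) : AddMonoidAlgebra (ZMod p) (ZMod N)) =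
          - AddMonoidAlgebra.single T.sum ((-1 : ZMod p) ^ (Multiset.card s - Multiset.card T)) := by
        intro T hT
        have hle : Multiset.card T ≤ Multiset.card s :=
          Multiset.card_le_card (Multiset.mem_powerset.mp hT)
        have hexp : Multiset.card (a ::ₘ s) - Multiset.card T =
            (Multiset.card s - Multiset.card T) + 1 := by
          rw [Multiset.card_cons]; omega
        rw [hexp, pow_succ,
          show ((-1 : ZMod p) ^ (Multiset.card s - Multiset.card T) * -1) =
            -((-1 : ZMod p) ^ (Multiset.card s - Multiset.card T)) by ring]
        exact AddMonoidAlgebra.single_neg _ _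

      rw [Multiset.map_congr rfl this]
      exact msum_neg _ _
    rw [h1, h2]
    abel

lemma count_zero_powerset {α : Type*} [DecidableEq (Multiset α)] (S : Multiset α) :
    S.powerset.count 0 = 1 := by
  induction S using Multiset.induction_on with
  | empty => simp
  | cons a s ih =>
    rw [Multiset.powerset_cons, Multiset.count_add, ih]
    have : (0 : Multiset α) ∉ Multiset.map (Multiset.cons a) s.powerset := by
      intro hmem
      rcases Multiset.mem_map.mp hmem with ⟨T, _, hT⟩
      exact Multiset.cons_ne_zero hT
    rw [Multiset.count_eq_zero_of_notMem this]

lemma sum_map_ite {α β : Type*} [DecidableEq α] [AddCommMonoid β] (s : Multiset α) (a : α)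
    (c : β) : (s.map (fun x => if x = a then c else 0)).sum = s.count a • c := by
  induction s using Multiset.induction_on with
  | empty => simp
  | cons x t ih =>
    rw [Multiset.map_cons, Multiset.sum_cons, ih, Multiset.count_cons]
    by_cases hx : x = a
    · subst hx; simp [add_smul, add_comm]
    · simp [hx, (Ne.symm hx : a ≠ x)]

lemma prod_ne_zero_of_zsf (S : Multiset (ZMod N))
    (h0 : ∀ T : Multiset (ZMod N), T ≤ S → T ≠ 0 → T.sum ≠ 0) :
    (S.map (fun g => AddMonoidAlgebra.single g (1 : ZMod p) - 1)).prod ≠ 0 := by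
  intro hzero
  rw [expand_prod] at hzero
  have happ := congrArg (fun f : AddMonoidAlgebra (ZMod p) (ZMod N) => f.coeff 0) hzero
  rw [eval_msum, Multiset.map_map] at happ
  have hc : ∀ T ∈ S.powerset,
      ((fun f : AddMonoidAlgebra (ZMod p) (ZMod N) => f.coeff 0) ∘ fun T : Multiset (ZMod N) =>
        AddMonoidAlgebra.single T.sum ((-1 : ZMod p) ^ (Multiset.card S - Multiset.card T))) T =
      (fun T : Multiset (ZMod N) => if T = 0 then (-1 : ZMod p) ^ (Multiset.card S) else 0) T := by
    intro T hT
    simp only [Function.comp_apply]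
    by_cases hT0 : T = 0
    · subst hT0
      simp [Finsupp.single_apply, AddMonoidAlgebra.coeff_single]
    · have : T.sum ≠ 0 := h0 T (Multiset.mem_powerset.mp hT) hT0
      simp [AddMonoidAlgebra.coeff_single, Finsupp.single_apply, this, hT0]
  rw [Multiset.map_congr rfl hc, sum_map_ite, count_zero_powerset, one_smul] at happ
  have : ((-1 : ZMod p) ^ (Multiset.card S)) ≠ 0 := by
    haveI : Fact (1 < p) := ⟨(Fact.out : p.Prime).one_lt⟩
    exact pow_ne_zero _ (neg_ne_zero.mpr one_ne_zero)
  exact this happ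

lemma map_prod_dvd {α R : Type*} [CommMonoid R] (s : Multiset α) (f h : α → R)
    (hd : ∀ x ∈ s, f x ∣ h x) : (s.map f).prod ∣ (s.map h).prod := by
  induction s using Multiset.induction_on with
  | empty => simp
  | cons a t ih =>
    simp only [Multiset.map_cons, Multiset.prod_cons]
    exact mul_dvd_mul (hd a (Multiset.mem_cons_self a t))
      (ih (fun x hx => hd x (Multiset.mem_cons_of_mem hx)))

lemma prod_map_pow' {α R : Type*} [CommMonoid R] (s : Multiset α) (u : R) (w : α → ℕ) :
    (s.map (fun x => u ^ w x)).prod = u ^ (s.map w).sum := by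
  induction s using Multiset.induction_on with
  | empty => simp
  | cons a t ih => simp [Multiset.sum_cons, pow_add, ih]

end GroupAlgebra

section Core

variable {p k : ℕ}

lemma core_bound (hp : p.Prime) (hodd : Odd p) (hk : 1 ≤ k)
    (S : Multiset (ZMod (2 * p ^ k))) (hzsf : IsZeroSumFree S)
    (hev : ∀ g ∈ S, 2 ∣ (ZMod.val g)) :
    (S.map (fun g => Nat.gcd (ZMod.val g) (p ^ k))).sum ≤ p ^ k - 1 := by
  haveI : Fact p.Prime := ⟨hp⟩
  have hq1 : 1 ≤ p ^ k := Nat.one_le_pow _ _ hp.pos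
  haveI : NeZero (2 * p ^ k) := ⟨by positivity⟩
  haveI hchar : CharP (AddMonoidAlgebra (ZMod p) (ZMod (2 * p ^ k))) p := by
    have hinj : Function.Injective
        (AddMonoidAlgebra.singleZeroRingHom (R := ZMod p) (M := ZMod (2 * p ^ k))) := by
      intro x y hxy
      simpa using AddMonoidAlgebra.single_right_injective (m := (0 : ZMod (2 * p ^ k))) hxy
    exact charP_of_injective_ringHom hinj p
  have hco2q : Nat.Coprime 2 (p ^ k) := (hodd.pow).coprime_two_left
  set ζ : AddMonoidAlgebra (ZMod p) (ZMod (2 * p ^ k)) :=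
    AddMonoidAlgebra.single ((2 : ℕ) : ZMod (2 * p ^ k)) 1 with hζ
  have hzpow : ∀ m : ℕ, ζ ^ m = AddMonoidAlgebra.single ((2 * m : ℕ) : ZMod (2 * p ^ k)) 1 := by
    intro m
    rw [hζ, AddMonoidAlgebra.single_pow, one_pow]
    congr 1
    push_cast
    rw [nsmul_eq_mul]
    ring
  have hzq : (ζ - 1) ^ (p ^ k) = 0 := by
    rw [sub_pow_char_pow, hzpow, one_pow, AddMonoidAlgebra.one_def]
    have h0 : ((2 * p ^ k : ℕ) : ZMod (2 * p ^ k)) = ((0 : ℕ) : ZMod (2 * p ^ k)) := by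
      simp [ZMod.natCast_self]
    rw [h0, Nat.cast_zero, sub_self]
  have hdvd : ∀ g : ZMod (2 * p ^ k), 2 ∣ g.val →
      (ζ - 1) ^ (Nat.gcd g.val (p ^ k)) ∣
        (AddMonoidAlgebra.single g 1 - (1 : AddMonoidAlgebra (ZMod p) (ZMod (2 * p ^ k)))) := by
    intro g hg
    obtain ⟨s, hs⟩ := hg
    have hbq : Nat.gcd g.val (p ^ k) = Nat.gcd s (p ^ k) := by
      rw [hs]; exact Nat.Coprime.gcd_mul_left_cancel s hco2q
    obtain ⟨i, hik, hb⟩ := (Nat.dvd_prime_pow hp).mp (Nat.gcd_dvd_right s (p ^ k))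
    have hbs : Nat.gcd s (p ^ k) * (s / Nat.gcd s (p ^ k)) = s :=
      Nat.mul_div_cancel' (Nat.gcd_dvd_left s (p ^ k))
    set m := s / Nat.gcd s (p ^ k) with hm
    have h1 : (ζ - 1) ∣ ζ ^ m - 1 := by
      simpa using sub_dvd_pow_sub_pow ζ 1 m
    have h3 : (ζ ^ m - 1) ^ (Nat.gcd s (p ^ k)) = AddMonoidAlgebra.single g 1 - 1 := by
      rw [hb, sub_pow_char_pow, ← pow_mul, one_pow, hzpow]
      have hval : (2 * (m * p ^ i) : ℕ) = 2 * s := by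
        rw [← hb, mul_comm m _, hbs]
      rw [hval, ← hs]
      have : ((g.val : ℕ) : ZMod (2 * p ^ k)) = g := ZMod.natCast_rightInverse g
      rw [this]
    rw [hbq, ← h3]
    exact pow_dvd_pow_of_dvd h1 _
  by_contra hcon
  push_neg at hcon
  have hsum : p ^ k ≤ (S.map (fun g => Nat.gcd (ZMod.val g) (p ^ k))).sum := by omega
  have hP : ((ζ - 1) ^ ((S.map (fun g => Nat.gcd (ZMod.val g) (p ^ k))).sum)) ∣
      (S.map (fun g => AddMonoidAlgebra.single g (1 : ZMod p) - 1)).prod := by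
    rw [← prod_map_pow']
    exact map_prod_dvd _ _ _ (fun g hg => hdvd g (hev g hg))
  have hzero : (S.map (fun g => AddMonoidAlgebra.single g (1 : ZMod p) - 1)).prod = 0 := by
    obtain ⟨c, hc⟩ := hP
    obtain ⟨r, hr⟩ := Nat.exists_eq_add_of_le hsum
    rw [hc, hr, pow_add, hzq, zero_mul, zero_mul]
  exact prod_ne_zero_of_zsf S hzsf hzero


def fmin {G : Type*} (bf : G → ℕ) : List G → ℕ
  | [] => 0
  | [_] => 0
  | a :: b :: rest => min (bf a) (bf b) + fmin bf rest

lemma sumb_le {G : Type*} (bf : G → ℕ) :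
    ∀ (L : List G) (c : ℕ), (∀ x ∈ L, bf x ≤ c) →
      L.Pairwise (fun x y => bf y ≤ bf x) → (L.map bf).sum ≤ 2 * fmin bf L + c
  | [], c, _, _ => by simp
  | [a], c, hb, _ => by
    simpa [fmin] using hb a (by simp)
  | a :: b :: rest, c, hb, hs => by
    have hab : bf b ≤ bf a := (List.pairwise_cons.mp hs).1 b (by simp)
    have hrest : ∀ x ∈ rest, bf x ≤ bf b :=
      fun x hx => (List.pairwise_cons.mp (List.pairwise_cons.mp hs).2).1 x hx
    have ih := sumb_le bf rest (bf b) hrest (List.pairwise_cons.mp (List.pairwise_cons.mp hs).2).2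
    have ha : bf a ≤ c := hb a (by simp)
    simp only [List.map_cons, List.sum_cons, fmin]
    have hmin : min (bf a) (bf b) = bf b := min_eq_right hab
    omega

lemma fmin_le_condense_sum {G : Type*} [AddCommGroup G] (bf : G → ℕ)
    (hmin : ∀ a b : G, min (bf a) (bf b) ≤ bf (a + b)) :
    ∀ L : List G, fmin bf L ≤ ((condense L).map bf).sum
  | [] => le_refl _
  | [_] => le_refl _
  | a :: b :: rest => by
    have ih := fmin_le_condense_sum bf hmin rest
    have h := hmin a b
    show min (bf a) (bf b) + fmin bf rest ≤ ((condense (a :: b :: rest)).map bf).sum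
    rw [show condense (a :: b :: rest) = (a + b) ::ₘ condense rest from rfl, Multiset.map_cons,
      Multiset.sum_cons]
    exact add_le_add h ih

lemma condense_even {n : ℕ} [NeZero n] (h2 : 2 ∣ n) :
    ∀ L : List (ZMod n), (∀ x ∈ L, ¬ 2 ∣ (ZMod.val x)) →
      ∀ y ∈ condense L, 2 ∣ (ZMod.val y)
  | [], _, y, hy => by simp [condense] at hy
  | [_], _, y, hy => by simp [condense] at hy
  | a :: b :: rest, hodd, y, hy => by
    rw [show condense (a :: b :: rest) = (a + b) ::ₘ condense rest from rfl,
      Multiset.mem_cons] at hy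
    rcases hy with rfl | hy
    · rw [ZMod.val_add]
      rw [Nat.dvd_mod_iff h2]
      have h1 : ¬ 2 ∣ a.val := hodd a (by simp)
      have h2 : ¬ 2 ∣ b.val := hodd b (by simp)
      omega
    · exact condense_even h2 rest (fun x hx => hodd x (by simp [hx])) y hy

lemma pow_dvd_of_le {p x y e : ℕ} (hp : p.Prime) (hx : x ∣ p ^ e) (hy : y ∣ p ^ e)
    (hxy : x ≤ y) : x ∣ y := by
  obtain ⟨i, hie, rfl⟩ := (Nat.dvd_prime_pow hp).mp hx
  obtain ⟨j, hje, rfl⟩ := (Nat.dvd_prime_pow hp).mp hy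
  exact pow_dvd_pow p ((Nat.pow_le_pow_iff_right hp.one_lt).mp hxy)

lemma bq_add_min {p k : ℕ} (hp : p.Prime) [NeZero (2 * p ^ k)] (a b : ZMod (2 * p ^ k)) :
    min (Nat.gcd (ZMod.val a) (p ^ k)) (Nat.gcd (ZMod.val b) (p ^ k)) ≤
      Nat.gcd (ZMod.val (a + b)) (p ^ k) := by
  have hpk : 0 < p ^ k := pow_pos hp.pos k
  have key : ∀ d : ℕ, d ∣ (ZMod.val a) → d ∣ (ZMod.val b) → d ∣ p ^ k →
      d ≤ Nat.gcd (ZMod.val (a + b)) (p ^ k) := by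
    intro d h1 h2 h3
    have hd2 : d ∣ 2 * p ^ k := Dvd.dvd.mul_left h3 2
    have hsum : d ∣ (ZMod.val a + ZMod.val b) := Nat.dvd_add h1 h2
    have hmod : d ∣ ZMod.val (a + b) := by
      rw [ZMod.val_add]
      exact (Nat.dvd_mod_iff hd2).mpr hsum
    exact Nat.le_of_dvd (Nat.gcd_pos_of_pos_right _ hpk) (Nat.dvd_gcd hmod h3)
  rcases le_total (Nat.gcd (ZMod.val a) (p ^ k)) (Nat.gcd (ZMod.val b) (p ^ k)) with h | h
  · rw [min_eq_left h]
    exact key _ (Nat.gcd_dvd_left _ _)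
      (dvd_trans (pow_dvd_of_le hp (Nat.gcd_dvd_right _ _) (Nat.gcd_dvd_right _ _) h)
        (Nat.gcd_dvd_left _ _)) (Nat.gcd_dvd_right _ _)
  · rw [min_eq_right h]
    exact key _ (dvd_trans (pow_dvd_of_le hp (Nat.gcd_dvd_right _ _) (Nat.gcd_dvd_right _ _) h)
        (Nat.gcd_dvd_left _ _)) (Nat.gcd_dvd_left _ _) (Nat.gcd_dvd_right _ _)

lemma weight_bound {p k : ℕ} (hp : p.Prime) (hodd : Odd p) (hk : 1 ≤ k)
    (S : Multiset (ZMod (2 * p ^ k))) (hzsf : IsZeroSumFree S) :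
    (S.map (fun g => Nat.gcd (ZMod.val g) (2 * p ^ k))).sum ≤ 3 * p ^ k - 2 := by
  classical
  haveI : Fact p.Prime := ⟨hp⟩
  have hq1 : 1 ≤ p ^ k := Nat.one_le_pow _ _ hp.pos
  haveI : NeZero (2 * p ^ k) := ⟨by positivity⟩
  have hco2q : Nat.Coprime 2 (p ^ k) := Nat.coprime_two_left.mpr (hodd.pow)
  set bq : ZMod (2 * p ^ k) → ℕ := fun g => Nat.gcd (ZMod.val g) (p ^ k) with hbq
  set S₀ := S.filter (fun g => 2 ∣ (ZMod.val g)) with hS0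
  set S₁ := S.filter (fun g => ¬ 2 ∣ (ZMod.val g)) with hS1
  have hsplit : S₀ + S₁ = S := Multiset.filter_add_not _ S
  set r : ZMod (2 * p ^ k) → ZMod (2 * p ^ k) → Prop := fun x y => bq y ≤ bq x with hr
  haveI : DecidableRel r := fun x y => Nat.decLe _ _
  haveI : IsTotal _ r := ⟨fun x y => le_total (bq y) (bq x)⟩
  haveI : IsTrans _ r := ⟨fun x y z h1 h2 => le_trans h2 h1⟩
  set L := S₁.toList.insertionSort r with hL
  have hLS : (L : Multiset (ZMod (2 * p ^ k))) = S₁ :=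
    (Multiset.coe_eq_coe.mpr (List.perm_insertionSort r S₁.toList)).trans
      (Multiset.coe_toList S₁)
  have hLodd : ∀ x ∈ L, ¬ 2 ∣ (ZMod.val x) := by
    intro x hx
    have hx' : x ∈ S₁ := by rw [← hLS]; exact Multiset.mem_coe.mpr hx
    exact (Multiset.mem_filter.mp hx').2
  set C := condense L with hC
  have hzsf' : IsZeroSumFree (S₀ + C) := by
    apply zsf_condense
    rw [hLS, hsplit]
    exact hzsf
  have hev' : ∀ g ∈ S₀ + C, 2 ∣ ZMod.val g := by
    intro g hg
    rcases Multiset.mem_add.mp hg with h | h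
    · exact (Multiset.mem_filter.mp h).2
    · exact condense_even ⟨p ^ k, rfl⟩ L hLodd g h
  have hcore := core_bound hp hodd hk (S₀ + C) hzsf' hev'
  rw [Multiset.map_add, Multiset.sum_add] at hcore
  have hfmin : fmin bq L ≤ (C.map bq).sum :=
    fmin_le_condense_sum bq (fun a b => bq_add_min hp a b) L
  have hsorted : (L.map bq).sum ≤ 2 * fmin bq L + p ^ k := by
    apply sumb_le
    · intro x hx
      exact Nat.le_of_dvd hq1 (Nat.gcd_dvd_right _ _)
    · exact List.pairwise_insertionSort r _
  have hW : (S.map (fun g => Nat.gcd (ZMod.val g) (2 * p ^ k))).sum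
      = 2 * (S₀.map bq).sum + (L.map bq).sum := by
    conv_lhs => rw [← hsplit]
    rw [Multiset.map_add, Multiset.sum_add]
    congr 1
    · rw [← Multiset.sum_map_mul_left]
      refine congrArg _ (Multiset.map_congr rfl ?_)
      intro g hg
      obtain ⟨s, hs⟩ := (Multiset.mem_filter.mp hg).2
      rw [hbq]
      simp only
      rw [hs, Nat.gcd_mul_left, Nat.Coprime.gcd_mul_left_cancel s hco2q]
    · have h1 : (S₁.map (fun g => Nat.gcd (ZMod.val g) (2 * p ^ k))).sum = (S₁.map bq).sum := by
        refine congrArg _ (Multiset.map_congr rfl ?_)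
        intro g hg
        have hoddg : ¬ 2 ∣ (ZMod.val g) := (Multiset.mem_filter.mp hg).2
        have hcop : Nat.Coprime 2 (ZMod.val g) :=
          Nat.coprime_two_left.mpr (Nat.odd_iff.mpr (by omega))
        exact Nat.Coprime.gcd_mul_left_cancel_right (p ^ k) hcop
      rw [h1, ← hLS, Multiset.map_coe, Multiset.sum_coe]
  rw [hW]
  rw [← hbq] at hcore
  omega

lemma crossnum_eq {n : ℕ} [NeZero n] (S : Multiset (ZMod n)) :
    crossNum S = ((S.map (fun g => Nat.gcd (ZMod.val g) n)).sum : ℚ) / (n : ℚ) := by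
  have hnpos : 0 < n := Nat.pos_of_ne_zero (NeZero.ne n)
  have hpt : ∀ g : ZMod n, (1 : ℚ) / (addOrderOf g : ℚ) =
      ((Nat.gcd (ZMod.val g) n : ℕ) : ℚ) * (1 / (n : ℚ)) := by
    intro g
    have hg : g = ((ZMod.val g : ℕ) : ZMod n) := (ZMod.natCast_rightInverse g).symm
    have hord : addOrderOf g = n / Nat.gcd n (ZMod.val g) := by
      conv_lhs => rw [hg]
      exact ZMod.addOrderOf_coe _ (NeZero.ne n)
    have hdvd : Nat.gcd n (ZMod.val g) ∣ n := Nat.gcd_dvd_left _ _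
    have hgcdpos : 0 < Nat.gcd n (ZMod.val g) := Nat.gcd_pos_of_pos_left _ hnpos
    rw [hord, Nat.cast_div hdvd (Nat.cast_ne_zero.mpr (Nat.pos_iff_ne_zero.mp hgcdpos))]
    rw [one_div_div, Nat.gcd_comm]
    ring
  unfold crossNum
  rw [Multiset.map_congr rfl (fun g _ => hpt g), Multiset.sum_map_mul_right,
    Nat.cast_multiset_sum, Multiset.map_map]
  simp only [Function.comp_def, mul_one_div]

lemma cast_ne_zero_of {q : ℕ} (hqodd : q % 2 = 1) {m : ℕ} [NeZero (2 * q)]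
    (h0 : m ≠ 0) (h2 : m ≠ 2 * q) (h4 : m < 4 * q) : ((m : ℕ) : ZMod (2 * q)) ≠ 0 := by
  rw [Ne, ZMod.natCast_eq_zero_iff]
  rintro ⟨c, hc⟩
  rcases c with _ | _ | c
  · omega
  · omega
  · have hx : 2 * q * (c + 1 + 1) = 2 * q * c + 4 * q := by ring
    omega

lemma sub_replicate {n a : ℕ} {y : ZMod n} {T : Multiset (ZMod n)}
    (hT : T ≤ Multiset.replicate a y) :
    T = Multiset.replicate (Multiset.card T) y ∧ Multiset.card T ≤ a := by
  constructor
  · exact Multiset.eq_replicate_card.mpr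
      (fun b hb => Multiset.eq_of_mem_replicate (Multiset.mem_of_le hT hb))
  · simpa using Multiset.card_le_card hT

lemma rep_sum {n t : ℕ} (c : ℕ) :
    (Multiset.replicate t ((c : ℕ) : ZMod n)).sum = ((t * c : ℕ) : ZMod n) := by
  rw [Multiset.sum_replicate, nsmul_eq_mul]
  push_cast
  ring

lemma zsf_repl_one {q : ℕ} (hqodd : q % 2 = 1) [NeZero (2 * q)] {j : ℕ}
    (hj : j ≤ 2 * q - 1) (hq1 : 1 ≤ q) :
    IsZeroSumFree (Multiset.replicate j (((1 : ℕ)) : ZMod (2 * q))) := by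
  intro T hT hT0 hsum
  obtain ⟨hrep, hcard⟩ := sub_replicate hT
  rw [hrep, rep_sum] at hsum
  have hc0 : Multiset.card T ≠ 0 := fun h => hT0 (by rw [hrep, h]; rfl)
  exact cast_ne_zero_of hqodd (by omega) (by omega) (by omega) hsum

lemma zsf_B1 {q : ℕ} (hqodd : q % 2 = 1) (hq1 : 1 ≤ q) [NeZero (2 * q)] {a : ℕ}
    (ha : a ≤ q - 1) :
    IsZeroSumFree (((q : ℕ) : ZMod (2 * q)) ::ₘ
      Multiset.replicate a (((2 : ℕ)) : ZMod (2 * q))) := by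
  classical
  intro T hT hT0 hsum
  rcases le_cons_elim hT with hT' | ⟨T', hT', rfl⟩
  · obtain ⟨hrep, hcard⟩ := sub_replicate hT'
    rw [hrep, rep_sum] at hsum
    have hc0 : Multiset.card T ≠ 0 := fun h => hT0 (by rw [hrep, h]; rfl)
    exact cast_ne_zero_of hqodd (by omega) (by omega) (by omega) hsum
  · obtain ⟨hrep, hcard⟩ := sub_replicate hT'
    rw [Multiset.sum_cons, hrep, rep_sum] at hsum
    have hsum' : ((q + Multiset.card T' * 2 : ℕ) : ZMod (2 * q)) = 0 := by
      push_cast at hsum ⊢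
      linear_combination hsum
    exact cast_ne_zero_of hqodd (by omega) (by omega) (by omega) hsum'

lemma zsf_B2 {q : ℕ} (hqodd : q % 2 = 1) (hq3 : 3 ≤ q) [NeZero (2 * q)] {a : ℕ}
    (ha : a ≤ q - 2) :
    IsZeroSumFree (((q : ℕ) : ZMod (2 * q)) ::ₘ ((q + 2 : ℕ) : ZMod (2 * q)) ::ₘ
      Multiset.replicate a (((2 : ℕ)) : ZMod (2 * q))) := by
  classical
  intro T hT hT0 hsum
  rcases le_cons_elim hT with hT1 | ⟨T1, hT1, rfl⟩
  · rcases le_cons_elim hT1 with hT2 | ⟨T2, hT2, rfl⟩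
    · obtain ⟨hrep, hcard⟩ := sub_replicate hT2
      rw [hrep, rep_sum] at hsum
      have hc0 : Multiset.card T ≠ 0 := fun h => hT0 (by rw [hrep, h]; rfl)
      exact cast_ne_zero_of hqodd (by omega) (by omega) (by omega) hsum
    · obtain ⟨hrep, hcard⟩ := sub_replicate hT2
      rw [Multiset.sum_cons, hrep, rep_sum] at hsum
      have hsum' : (((q + 2) + Multiset.card T2 * 2 : ℕ) : ZMod (2 * q)) = 0 := by
        push_cast at hsum ⊢
        linear_combination hsum
      exact cast_ne_zero_of hqodd (by omega) (by omega) (by omega) hsum'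
  · rcases le_cons_elim hT1 with hT2 | ⟨T2, hT2, rfl⟩
    · obtain ⟨hrep, hcard⟩ := sub_replicate hT2
      rw [Multiset.sum_cons, hrep, rep_sum] at hsum
      have hsum' : ((q + Multiset.card T1 * 2 : ℕ) : ZMod (2 * q)) = 0 := by
        push_cast at hsum ⊢
        linear_combination hsum
      exact cast_ne_zero_of hqodd (by omega) (by omega) (by omega) hsum'
    · obtain ⟨hrep, hcard⟩ := sub_replicate hT2
      rw [Multiset.sum_cons, Multiset.sum_cons, hrep, rep_sum] at hsum
      have hsum' : ((q + (q + 2) + Multiset.card T2 * 2 : ℕ) : ZMod (2 * q)) = 0 := by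
        push_cast at hsum ⊢
        linear_combination hsum
      exact cast_ne_zero_of hqodd (by omega) (by omega) (by omega) hsum'

lemma cop_q2 {q : ℕ} (hqodd : q % 2 = 1) : Nat.gcd (q + 2) (2 * q) = 1 := by
  have h1 : Nat.Coprime (q + 2) 2 :=
    Nat.coprime_two_right.mpr (Nat.odd_iff.mpr (by omega))
  have h2 : Nat.Coprime (q + 2) q := by
    have := Nat.coprime_add_self_right (m := q) (n := 2)
    have h3 : Nat.Coprime q (q + 2) := by
      rw [show q + 2 = 2 + q by ring]
      exact (Nat.coprime_add_self_right).mpr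
        (Nat.coprime_two_right.mpr (Nat.odd_iff.mpr hqodd))
    exact Nat.coprime_comm.mp h3
  exact Nat.Coprime.mul_right h1 h2

end Core

theorem stmt12 (p k : ℕ) (hp : p.Prime) (hodd : Odd p) (hk : 1 ≤ k) :
    wSet (ZMod (2 * p ^ k)) =
      { x : ℚ | ∃ j : ℕ, 1 ≤ j ∧ j ≤ 3 * p ^ k - 2 ∧
        x = (j : ℚ) / ((2 * p ^ k : ℕ) : ℚ) } := by
  haveI : Fact p.Prime := ⟨hp⟩
  have hp3 : 3 ≤ p := by
    have h2 := hp.two_le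
    have h3 := Nat.odd_iff.mp hodd
    omega
  have hq3 : 3 ≤ p ^ k := le_trans hp3 (Nat.le_self_pow (by omega) p)
  have hqodd : p ^ k % 2 = 1 := Nat.odd_iff.mp (hodd.pow)
  haveI : NeZero (2 * p ^ k) := ⟨by positivity⟩
  ext x
  simp only [wSet, Set.mem_setOf_eq]
  constructor
  · rintro ⟨S, hS0, hzsf, rfl⟩
    refine ⟨(S.map (fun g => Nat.gcd (ZMod.val g) (2 * p ^ k))).sum, ?_,
      weight_bound hp hodd hk S hzsf, ?_⟩
    · obtain ⟨g, hg⟩ := Multiset.exists_mem_of_ne_zero hS0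
      obtain ⟨T, hT⟩ := Multiset.exists_cons_of_mem
        (Multiset.mem_map_of_mem (fun g => Nat.gcd (ZMod.val g) (2 * p ^ k)) hg)
      rw [hT, Multiset.sum_cons]
      have h1 : 0 < Nat.gcd (ZMod.val g) (2 * p ^ k) :=
        Nat.gcd_pos_of_pos_right _ (by positivity)
      exact Nat.le_add_right_of_le h1
    · rw [crossnum_eq]
  · rintro ⟨j, hj1, hj2, rfl⟩
    have hg2 : Nat.gcd 2 (2 * p ^ k) = 2 := Nat.gcd_eq_left (dvd_mul_right 2 (p ^ k))
    have hg1 : Nat.gcd (p ^ k) (2 * p ^ k) = p ^ k := Nat.gcd_eq_left (dvd_mul_left _ _)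
    have hv1 : ZMod.val (((p ^ k : ℕ)) : ZMod (2 * p ^ k)) = p ^ k :=
      ZMod.val_cast_of_lt (by omega)
    have hv2 : ZMod.val (((2 : ℕ)) : ZMod (2 * p ^ k)) = 2 := ZMod.val_cast_of_lt (by omega)
    by_cases hcase : j ≤ 2 * p ^ k - 1
    · refine ⟨Multiset.replicate j (((1 : ℕ)) : ZMod (2 * p ^ k)), ?_,
        zsf_repl_one hqodd hcase (by omega), ?_⟩
      · intro h
        have := congrArg Multiset.card h
        simp at this
        omega
      · rw [crossnum_eq, Multiset.map_replicate, Multiset.sum_replicate]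
        have hv : ZMod.val (((1 : ℕ)) : ZMod (2 * p ^ k)) = 1 := ZMod.val_cast_of_lt (by omega)
        rw [hv, Nat.gcd_one_left, smul_eq_mul, mul_one]
    · have hjq : 2 * p ^ k ≤ j := by omega
      by_cases hpar : (j - p ^ k) % 2 = 0
      · set a := (j - p ^ k) / 2 with hadef
        have hja : j = p ^ k + 2 * a := by omega
        have ha : a ≤ p ^ k - 1 := by omega
        refine ⟨_, Multiset.cons_ne_zero, zsf_B1 hqodd (by omega) ha, ?_⟩
        rw [crossnum_eq, Multiset.map_cons, Multiset.sum_cons, Multiset.map_replicate,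
          Multiset.sum_replicate, hv1, hv2, hg1, hg2, smul_eq_mul]
        rw [show p ^ k + a * 2 = j by omega]
      · set a := (j - p ^ k - 1) / 2 with hadef
        have hja : j = p ^ k + 1 + 2 * a := by omega
        have ha : a ≤ p ^ k - 2 := by omega
        refine ⟨_, Multiset.cons_ne_zero, zsf_B2 hqodd hq3 ha, ?_⟩
        rw [crossnum_eq, Multiset.map_cons, Multiset.map_cons, Multiset.sum_cons,
          Multiset.sum_cons, Multiset.map_replicate, Multiset.sum_replicate]
        have hv3 : ZMod.val (((p ^ k + 2 : ℕ)) : ZMod (2 * p ^ k)) = p ^ k + 2 :=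
          ZMod.val_cast_of_lt (by omega)
        rw [hv1, hv3, hv2, hg1, hg2, cop_q2 hqodd, smul_eq_mul]
        rw [show p ^ k + (1 + a * 2) = j by omega]
end
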